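/- arXiv:1304.4396 — 11 statements merged into one kernel-verified Lean document; each statement's English description precedes it below -/
import Mathlib

section
/- If a sequent A ⊢ B is derivable in the reflection calculus RJ (with modalities indexed by ordinals α ≤ ω, axioms: identity, top, cut, conjunction introduction/elimination, monotonicity rule for diamonds, ⟨α⟩⟨α⟩A ⊢ ⟨α⟩A, ⟨α⟩⟨β⟩A ⊢ ⟨β⟩A and ⟨β⟩⟨α⟩A ⊢ ⟨β⟩A for α ≥ β, and ⟨α⟩A ∧ ⟨β⟩B ⊢ ⟨α⟩(A ∧ ⟨β⟩B) for α > β), then every modality label occurring in B occurs in A. -/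
/-- Modality labels: natural numbers together with ω (= ⊤). -/
abbrev Lbl := WithTop ℕ

/-- Strictly positive formulas: variables, ⊤, conjunction, diamonds ⟨α⟩ for α ≤ ω. -/
inductive SPF : Type where
  | var : ℕ → SPF
  | top : SPF
  | and : SPF → SPF → SPF
  | dia : Lbl → SPF → SPF

/-- The set of modality labels occurring in a formula. -/
def labels : SPF → Set Lbl
  | .var _ => ∅
  | .top => ∅
  | .and A B => labels A ∪ labels B
  | .dia α A => insert α (labels A)
/-- The reflection calculus RJ. -/
inductive RJ : SPF → SPF → Prop where
  | id (A) : RJ A A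
  | top (A) : RJ A .top
  | cut {A B C} : RJ A B → RJ B C → RJ A C
  | andE1 (A B) : RJ (.and A B) A
  | andE2 (A B) : RJ (.and A B) B
  | andI {A B C} : RJ A B → RJ A C → RJ A (.and B C)
  | diaMono {A B} (α) : RJ A B → RJ (.dia α A) (.dia α B)
  | transAx (α A) : RJ (.dia α (.dia α A)) (.dia α A)
  | mix1 {α β} (A) : β ≤ α → RJ (.dia α (.dia β A)) (.dia β A)
  | mix2 {α β} (A) : β ≤ α → RJ (.dia β (.dia α A)) (.dia β A)
  | jax {α β} (A B) : β < α → RJ (.and (.dia α A) (.dia β B)) (.dia α (.and A (.dia β B)))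

/-- If A ⊢ B is derivable in RJ, every modality label occurring in B occurs in A. -/
theorem stmt0 {A B : SPF} (h : RJ A B) : labels B ⊆ labels A := by
  induction h with
  | id => exact subset_rfl
  | top => simp [labels]
  | cut _ _ ih1 ih2 => exact ih2.trans ih1
  | andE1 A B => exact Set.subset_union_left
  | andE2 A B => exact Set.subset_union_right
  | andI _ _ ih1 ih2 => exact Set.union_subset ih1 ih2
  | diaMono α _ ih => exact Set.insert_subset_insert ih
  | transAx α A => simp [labels]
  | mix1 A h => simp only [labels]; exact Set.subset_insert _ _
  | mix2 A h => intro x hx; simp [labels] at hx ⊢; tauto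
  | jax A B h => intro x hx; simp [labels] at hx ⊢; tauto
end

section
/- If a sequent A ⊢ B is derivable in the reflection calculus RC (RJ extended with the monotonicity axiom ⟨α⟩A ⊢ ⟨β⟩A for α > β), then every modality label occurring in B is at most the maximum modality label occurring in A (assuming A contains at least one modality). -/
/-- The reflection calculus RC = RJ + monotonicity ⟨α⟩A ⊢ ⟨β⟩A for α > β. -/
inductive RC : SPF → SPF → Prop where
  | id (A) : RC A A
  | top (A) : RC A .top
  | cut {A B C} : RC A B → RC B C → RC A C
  | andE1 (A B) : RC (.and A B) A
  | andE2 (A B) : RC (.and A B) B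
  | andI {A B C} : RC A B → RC A C → RC A (.and B C)
  | diaMono {A B} (α) : RC A B → RC (.dia α A) (.dia α B)
  | transAx (α A) : RC (.dia α (.dia α A)) (.dia α A)
  | mix1 {α β} (A) : β ≤ α → RC (.dia α (.dia β A)) (.dia β A)
  | mix2 {α β} (A) : β ≤ α → RC (.dia β (.dia α A)) (.dia β A)
  | jax {α β} (A B) : β < α → RC (.and (.dia α A) (.dia β B)) (.dia α (.and A (.dia β B)))
  | mono {α β} (A) : β < α → RC (.dia α A) (.dia β A)


lemma RC.labels_le {A B : SPF} (h : RC A B) (M : Lbl)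
    (hmax : ∀ k ∈ labels A, k ≤ M) : ∀ β ∈ labels B, β ≤ M := by
  induction h with
  | id => exact hmax
  | top => simp [labels]
  | cut h1 h2 ih1 ih2 => exact ih2 (ih1 hmax)
  | andE1 A B => intro β hβ; exact hmax β (Or.inl hβ)
  | andE2 A B => intro β hβ; exact hmax β (Or.inr hβ)
  | andI h1 h2 ih1 ih2 =>
      intro β hβ; rcases hβ with hβ | hβ
      · exact ih1 hmax β hβ
      · exact ih2 hmax β hβ
  | diaMono α h ih =>
      intro β hβ; rcases hβ with rfl | hβ
      · exact hmax β (Or.inl rfl)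
      · exact ih (fun k hk => hmax k (Or.inr hk)) β hβ
  | transAx α A =>
      intro β hβ; rcases hβ with rfl | hβ
      · exact hmax β (Or.inl rfl)
      · exact hmax β (Or.inr (Or.inr hβ))
  | mix1 A hle =>
      intro β hβ; rcases hβ with rfl | hβ
      · exact hmax β (Or.inr (Or.inl rfl))
      · exact hmax β (Or.inr (Or.inr hβ))
  | mix2 A hle =>
      intro β hβ; rcases hβ with rfl | hβ
      · exact hmax β (Or.inl rfl)
      · exact hmax β (Or.inr (Or.inr hβ))
  | jax A B hlt =>
      intro β hβ
      simp only [labels, Set.mem_union, Set.mem_insert_iff] at hβ hmax ⊢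
      rcases hβ with rfl | hβ | rfl | hβ
      · exact hmax β (Or.inl (Or.inl rfl))
      · exact hmax β (Or.inl (Or.inr hβ))
      · exact hmax β (Or.inr (Or.inl rfl))
      · exact hmax β (Or.inr (Or.inr hβ))
  | mono A hlt =>
      intro β hβ; rcases hβ with rfl | hβ
      · exact le_trans (le_of_lt hlt) (hmax _ (Or.inl rfl))
      · exact hmax β (Or.inr hβ)

/-- If A ⊢ B is derivable in RC, every modality label occurring in B is at most the
maximum modality label occurring in A (assuming A contains at least one modality). -/
theorem stmt1 {A B : SPF} (h : RC A B) (M : Lbl) (hM : M ∈ labels A)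
    (hmax : ∀ k ∈ labels A, k ≤ M) : ∀ β ∈ labels B, β ≤ M := by
  exact RC.labels_le h M hmax
end

section
/- Soundness of RCω for persistent RC-models: if A ⊢ B is derivable in RCω, then in every Kripke model whose frame is polytransitive, satisfies condition J, is monotone (R_α ⊆ R_β whenever β < α), and whose valuation is downwards persistent along R_ω, every node forcing A forces B. -/
/-- The reflection calculus RCω = RC + persistence ⟨ω⟩A ⊢ A. -/
inductive RCw : SPF → SPF → Prop where
  | id (A) : RCw A A
  | top (A) : RCw A .top
  | cut {A B C} : RCw A B → RCw B C → RCw A C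
  | andE1 (A B) : RCw (.and A B) A
  | andE2 (A B) : RCw (.and A B) B
  | andI {A B C} : RCw A B → RCw A C → RCw A (.and B C)
  | diaMono {A B} (α) : RCw A B → RCw (.dia α A) (.dia α B)
  | transAx (α A) : RCw (.dia α (.dia α A)) (.dia α A)
  | mix1 {α β} (A) : β ≤ α → RCw (.dia α (.dia β A)) (.dia β A)
  | mix2 {α β} (A) : β ≤ α → RCw (.dia β (.dia α A)) (.dia β A)
  | jax {α β} (A B) : β < α → RCw (.and (.dia α A) (.dia β B)) (.dia α (.and A (.dia β B)))
  | mono {α β} (A) : β < α → RCw (.dia α A) (.dia β A)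
  | pers (A) : RCw (.dia ⊤ A) A
/-- Kripke forcing for strictly positive formulas. -/
def forces {W : Type} (R : Lbl → W → W → Prop) (v : W → ℕ → Prop) : SPF → W → Prop
  | .var p, x => v x p
  | .top, _ => True
  | .and A B, x => forces R v A x ∧ forces R v B x
  | .dia α A, x => ∃ y, R α x y ∧ forces R v A y

lemma pers_forces {W : Type} (R : Lbl → W → W → Prop) (v : W → ℕ → Prop)
    (poly : ∀ α β x y z, R α x y → R β y z → R (min α β) x z)
    (persv : ∀ x y p, R ⊤ x y → v y p → v x p) :
    ∀ (A : SPF) (x y : W), R ⊤ x y → forces R v A y → forces R v A x := by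
  intro A
  induction A with
  | var p => intro x y h hv; exact persv x y p h hv
  | top => intro _ _ _ _; trivial
  | and A B ihA ihB =>
      intro x y h hv
      exact ⟨ihA x y h hv.1, ihB x y h hv.2⟩
  | dia α A _ =>
      rintro x y h ⟨z, hz, hA⟩
      have := poly ⊤ α x y z h hz
      simp at this
      exact ⟨z, this, hA⟩

/-- Soundness of RCω for persistent RC-models: if A ⊢ B is derivable in RCω then in
every Kripke model whose frame is polytransitive, satisfies condition J and is monotone,
and whose valuation is downwards persistent along R_ω, every node forcing A forces B. -/
theorem stmt7 {A B : SPF} (h : RCw A B) :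
    ∀ {W : Type} (R : Lbl → W → W → Prop) (v : W → ℕ → Prop),
      (∀ α β x y z, R α x y → R β y z → R (min α β) x z) →
      (∀ α β x y z, β < α → R α x y → R β x z → R β y z) →
      (∀ α β, β < α → ∀ x y, R α x y → R β x y) →
      (∀ x y p, R ⊤ x y → v y p → v x p) →
      ∀ x, forces R v A x → forces R v B x := by
  induction h with
  | id A => intro W R v _ _ _ _ x h; exact h
  | top A => intro W R v _ _ _ _ x _; trivial
  | cut h1 h2 ih1 ih2 =>
      intro W R v poly j mon pv x h
      exact ih2 R v poly j mon pv x (ih1 R v poly j mon pv x h)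
  | andE1 A B => intro W R v _ _ _ _ x h; exact h.1
  | andE2 A B => intro W R v _ _ _ _ x h; exact h.2
  | andI h1 h2 ih1 ih2 =>
      intro W R v poly j mon pv x h
      exact ⟨ih1 R v poly j mon pv x h, ih2 R v poly j mon pv x h⟩
  | diaMono α h ih =>
      rintro W R v poly j mon pv x ⟨y, hy, hA⟩
      exact ⟨y, hy, ih R v poly j mon pv y hA⟩
  | transAx α A =>
      rintro W R v poly j mon pv x ⟨y, hy, z, hz, hA⟩
      have := poly α α x y z hy hz
      simpa using ⟨z, by simpa using this, hA⟩
  | mix1 A hba =>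
      rename_i α β
      rintro W R v poly j mon pv x ⟨y, hy, z, hz, hA⟩
      have := poly α β x y z hy hz
      rw [min_eq_right hba] at this
      exact ⟨z, this, hA⟩
  | mix2 A hba =>
      rename_i α β
      rintro W R v poly j mon pv x ⟨y, hy, z, hz, hA⟩
      have := poly β α x y z hy hz
      rw [min_eq_left hba] at this
      exact ⟨z, this, hA⟩
  | jax A B hba =>
      rename_i α β
      rintro W R v poly j mon pv x ⟨⟨y, hy, hA⟩, ⟨z, hz, hB⟩⟩
      exact ⟨y, hy, hA, z, j α β x y z hba hy hz, hB⟩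
  | mono A hba =>
      rename_i α β
      rintro W R v poly j mon pv x ⟨y, hy, hA⟩
      exact ⟨y, mon α β hba x y hy, hA⟩
  | pers A =>
      rintro W R v poly j mon pv x ⟨y, hy, hA⟩
      exact pers_forces R v poly pv A x y hy hA
end

section
/- There exists a persistent RC-model falsifying the sequent ⟨ω⟩p ∧ ⟨ω⟩q ⊢ ⟨ω⟩(p ∧ q); consequently, ⟨ω⟩p ∧ ⟨ω⟩q ⊢ ⟨ω⟩(p ∧ q) is not derivable in RCω. -/
theorem persistAll {W : Type} (R : Lbl → W → W → Prop) (v : W → ℕ → Prop)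
    (h1 : ∀ α β x y z, R α x y → R β y z → R (min α β) x z)
    (h4 : ∀ x y p, R ⊤ x y → v y p → v x p) :
    ∀ (A : SPF) (x y : W), R ⊤ x y → forces R v A y → forces R v A x := by
  intro A
  induction A with
  | var p => exact fun x y hxy h => h4 x y p hxy h
  | top => intro _ _ _ _; trivial
  | and A B ihA ihB => exact fun x y hxy h => ⟨ihA x y hxy h.1, ihB x y hxy h.2⟩
  | dia α A ih =>
    rintro x y hxy ⟨z, hyz, hz⟩
    refine ⟨z, ?_, hz⟩
    have := h1 ⊤ α x y z hxy hyz
    rwa [min_eq_right le_top] at this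

theorem sound {W : Type} (R : Lbl → W → W → Prop) (v : W → ℕ → Prop)
    (h1 : ∀ α β x y z, R α x y → R β y z → R (min α β) x z)
    (h2 : ∀ α β x y z, β < α → R α x y → R β x z → R β y z)
    (h3 : ∀ α β, β < α → ∀ x y, R α x y → R β x y)
    (h4 : ∀ x y p, R ⊤ x y → v y p → v x p)
    {A B : SPF} (h : RCw A B) : ∀ x, forces R v A x → forces R v B x := by
  induction h with
  | id A => exact fun x h => h
  | top A => exact fun x _ => trivial
  | cut _ _ ih1 ih2 => exact fun x h => ih2 x (ih1 x h)
  | andE1 A B => exact fun x h => h.1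
  | andE2 A B => exact fun x h => h.2
  | andI _ _ ih1 ih2 => exact fun x h => ⟨ih1 x h, ih2 x h⟩
  | diaMono α _ ih => rintro x ⟨y, hxy, hy⟩; exact ⟨y, hxy, ih y hy⟩
  | transAx α A =>
    rintro x ⟨y, hxy, z, hyz, hz⟩
    have := h1 α α x y z hxy hyz
    rw [min_self] at this
    exact ⟨z, this, hz⟩
  | @mix1 α β A hβα =>
    rintro x ⟨y, hxy, z, hyz, hz⟩
    have := h1 α β x y z hxy hyz
    rw [min_eq_right hβα] at this
    exact ⟨z, this, hz⟩
  | @mix2 α β A hβα =>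
    rintro x ⟨y, hxy, z, hyz, hz⟩
    have := h1 β α x y z hxy hyz
    rw [min_eq_left hβα] at this
    exact ⟨z, this, hz⟩
  | @jax α β A B hβα =>
    rintro x ⟨⟨y, hxy, hy⟩, ⟨z, hxz, hz⟩⟩
    exact ⟨y, hxy, hy, z, h2 α β x y z hβα hxy hxz, hz⟩
  | @mono α β A hβα =>
    rintro x ⟨y, hxy, hy⟩
    exact ⟨y, h3 α β hβα x y hxy, hy⟩
  | pers A =>
    rintro x ⟨y, hxy, hy⟩
    exact persistAll R v h1 h4 A x y hxy hy

/-- There is a persistent RC-model falsifying ⟨ω⟩p ∧ ⟨ω⟩q ⊢ ⟨ω⟩(p ∧ q); consequently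
this sequent is not derivable in RCω. -/
theorem stmt8 :
    (∃ (W : Type) (R : Lbl → W → W → Prop) (v : W → ℕ → Prop),
      (∀ α β x y z, R α x y → R β y z → R (min α β) x z) ∧
      (∀ α β x y z, β < α → R α x y → R β x z → R β y z) ∧
      (∀ α β, β < α → ∀ x y, R α x y → R β x y) ∧
      (∀ x y p, R ⊤ x y → v y p → v x p) ∧
      ∃ x, forces R v (.and (.dia ⊤ (.var 0)) (.dia ⊤ (.var 1))) x ∧
           ¬ forces R v (.dia ⊤ (.and (.var 0) (.var 1))) x) ∧
    ¬ RCw (.and (.dia ⊤ (.var 0)) (.dia ⊤ (.var 1)))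
          (.dia ⊤ (.and (.var 0) (.var 1))) := by
  set R : Lbl → Fin 3 → Fin 3 → Prop :=
    fun α x y => (x = 0 ∧ (y = 1 ∨ y = 2)) ∨ (α ≠ ⊤ ∧ x ≠ 0 ∧ y ≠ 0) with hR
  set v : Fin 3 → ℕ → Prop :=
    fun x p => x = 0 ∨ (x = 1 ∧ p = 0) ∨ (x = 2 ∧ p = 1) with hv
  have fin3 : ∀ z : Fin 3, z ≠ 0 → z = 1 ∨ z = 2 := by decide
  have h1 : ∀ α β x y z, R α x y → R β y z → R (min α β) x z := by
    rintro α β x y z (⟨hx, hy⟩ | ⟨hα, hx, hy⟩) (⟨hy', hz⟩ | ⟨hβ, hy', hz⟩)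
    · exfalso; rcases hy with h | h <;> rw [h] at hy' <;> exact absurd hy' (by decide)
    · left; exact ⟨hx, fin3 z hz⟩
    · exact absurd hy' hy
    · right
      refine ⟨?_, hx, hz⟩
      simp only [ne_eq, min_eq_top]
      tauto
  have h2 : ∀ α β x y z, β < α → R α x y → R β x z → R β y z := by
    rintro α β x y z hβα (⟨hx, hy⟩ | ⟨hα, hx, hy⟩) (⟨hx', hz⟩ | ⟨hβ, hx', hz⟩)
    · right
      refine ⟨hβα.ne_top, ?_, ?_⟩
      · rcases hy with h | h <;> rw [h] <;> decide
      · rcases hz with h | h <;> rw [h] <;> decide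
    · exact absurd hx hx'
    · exact absurd hx' hx
    · right; exact ⟨hβα.ne_top, hy, hz⟩
  have h3 : ∀ α β, β < α → ∀ x y, R α x y → R β x y := by
    rintro α β hβα x y (⟨hx, hy⟩ | ⟨hα, hx, hy⟩)
    · left; exact ⟨hx, hy⟩
    · right; exact ⟨hβα.ne_top, hx, hy⟩
  have h4 : ∀ x y p, R ⊤ x y → v y p → v x p := by
    rintro x y p (⟨hx, hy⟩ | ⟨hα, hx, hy⟩) _
    · left; exact hx
    · exact absurd rfl hα
  have hx0 : forces R v (.and (.dia ⊤ (.var 0)) (.dia ⊤ (.var 1))) 0 ∧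
      ¬ forces R v (.dia ⊤ (.and (.var 0) (.var 1))) 0 := by
    constructor
    · exact ⟨⟨1, Or.inl ⟨rfl, Or.inl rfl⟩, Or.inr (Or.inl ⟨rfl, rfl⟩)⟩,
        ⟨2, Or.inl ⟨rfl, Or.inr rfl⟩, Or.inr (Or.inr ⟨rfl, rfl⟩)⟩⟩
    · rintro ⟨y, (⟨-, hy⟩ | ⟨hα, -, -⟩), hp, hq⟩
      · rcases hy with h | h <;> subst h <;>
          simp only [forces, hv] at hp hq <;> revert hp hq <;> decide
      · exact hα rfl
  refine ⟨⟨Fin 3, R, v, h1, h2, h3, h4, 0, hx0⟩, fun hder => ?_⟩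
  exact hx0.2 (sound R v h1 h2 h3 h4 hder 0 hx0.1)
end

section
/- Canonical tree characterizes satisfaction: for any strictly positive formulas A (with canonical parse tree model T[A]) and B, and any Kripke model W with node x: W, x ⊨ B if and only if there exists a homomorphism f from T[B] into W mapping the root of T[B] to x. -/
/-- A Kripke model for the strictly positive language. -/
structure KModel where
  W : Type
  R : Lbl → W → W → Prop
  v : W → ℕ → Prop

/-- A rooted Kripke model. -/
structure PKModel extends KModel where
  root : W

/-- Forcing in a Kripke model. -/
def KModel.forces (M : KModel) : SPF → M.W → Prop
  | .var p, x => M.v x p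
  | .top, _ => True
  | .and A B, x => M.forces A x ∧ M.forces B x
  | .dia α A, x => ∃ y, M.R α x y ∧ M.forces A y

/-- Glueing two rooted models by identifying their roots (a variable is true at the
common root iff it is true at the root of either part). -/
def glue (M N : PKModel) : PKModel where
  W := { x : M.W ⊕ N.W // x ≠ Sum.inr N.root }
  R := fun α x y =>
    match x.1, y.1 with
    | Sum.inl a, Sum.inl a' => M.R α a a'
    | Sum.inl a, Sum.inr b => a = M.root ∧ N.R α N.root b
    | Sum.inr b, Sum.inr b' => N.R α b b'
    | Sum.inr _, Sum.inl _ => False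
  v := fun x q =>
    match x.1 with
    | Sum.inl a => M.v a q ∨ (a = M.root ∧ N.v N.root q)
    | Sum.inr b => N.v b q
  root := ⟨Sum.inl M.root, by simp⟩

/-- Adding a fresh root (with all variables false) R_α-related to the old root. -/
def prepend (α : Lbl) (M : PKModel) : PKModel where
  W := Option M.W
  R := fun β x y =>
    match x, y with
    | none, some a => β = α ∧ a = M.root
    | some a, some a' => M.R β a a'
    | _, _ => False
  v := fun x q => match x with | none => False | some a => M.v a q
  root := none

/-- The canonical tree T[A] of a strictly positive formula A (its parse tree viewed as
a rooted Kripke model). -/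
def T : SPF → PKModel
  | .var p => { W := Unit, R := fun _ _ _ => False, v := fun _ q => q = p, root := () }
  | .top => { W := Unit, R := fun _ _ _ => False, v := fun _ _ => False, root := () }
  | .and A B => glue (T A) (T B)
  | .dia α A => prepend α (T A)

/-- Homomorphisms of Kripke models: they preserve the relations R_α and variable truth
forwards. -/
def Hom (M N : KModel) (f : M.W → N.W) : Prop :=
  (∀ α x y, M.R α x y → N.R α (f x) (f y)) ∧ (∀ x p, M.v x p → N.v (f x) p)

theorem root_not_target (B : SPF) (α : Lbl) (y : (T B).W) :
    ¬ (T B).R α y (T B).root := by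
  induction B with
  | var p => exact fun h => h
  | top => exact fun h => h
  | and A C ihA ihC =>
    obtain ⟨y, hy⟩ := y
    cases y with
    | inl a => exact fun h => ihA a h
    | inr b => exact fun h => h
  | dia β A ih =>
    cases y with
    | none => exact fun h => h
    | some a => exact fun h => h

/-- Canonical tree characterizes satisfaction: W, x ⊨ B iff there is a homomorphism of
T[B] into W mapping the root of T[B] to x. -/
theorem stmt10 (Wm : KModel) (x : Wm.W) (B : SPF) :
    Wm.forces B x ↔
      ∃ f : (T B).W → Wm.W, Hom (T B).toKModel Wm f ∧ f (T B).root = x := by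
  induction B generalizing x with
  | var p =>
    constructor
    · intro h
      exact ⟨fun _ => x, ⟨fun α a b hab => hab.elim,
        fun a q hq => by cases a; subst hq; exact h⟩, rfl⟩
    · rintro ⟨f, hf, hroot⟩
      have h0 : f () = x := hroot
      have := hf.2 () p rfl
      rwa [h0] at this
  | top =>
    constructor
    · intro _
      exact ⟨fun _ => x, ⟨fun α a b hab => hab.elim, fun a q hq => hq.elim⟩, rfl⟩
    · intro _; trivial
  | and A C ihA ihC =>
    constructor
    · rintro ⟨hA, hC⟩
      obtain ⟨f, hf, hfr⟩ := (ihA x).mp hA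
      obtain ⟨g, hg, hgr⟩ := (ihC x).mp hC
      refine ⟨fun y => match y.1 with | .inl a => f a | .inr b => g b, ⟨?_, ?_⟩, hfr⟩
      · rintro β ⟨y1, hy⟩ ⟨z1, hz⟩ hyz
        cases y1 with
        | inl a =>
          cases z1 with
          | inl a' => exact hf.1 β a a' hyz
          | inr b =>
            obtain ⟨ha, hR⟩ := hyz
            have := hg.1 β (T C).root b hR
            rw [hgr] at this
            simpa [ha, hfr] using this
        | inr b =>
          cases z1 with
          | inl a' => exact hyz.elim
          | inr b' => exact hg.1 β b b' hyz
      · rintro ⟨y1, hy⟩ p hv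
        cases y1 with
        | inl a =>
          rcases hv with hv | ⟨ha, hv⟩
          · exact hf.2 a p hv
          · have := hg.2 (T C).root p hv
            rw [hgr] at this
            simpa [ha, hfr] using this
        | inr b => exact hg.2 b p hv
    · rintro ⟨h, hh, hr⟩
      have hr' : h (glue (T A) (T C)).root = x := hr
      classical
      constructor
      · refine (ihA x).mpr ⟨fun a => h ⟨Sum.inl a, by simp⟩, ⟨?_, ?_⟩, ?_⟩
        · intro β a a' hR
          exact hh.1 β ⟨Sum.inl a, by simp⟩ ⟨Sum.inl a', by simp⟩ hR
        · intro a p hv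
          exact hh.2 ⟨Sum.inl a, by simp⟩ p (Or.inl hv)
        · exact hr
      · refine (ihC x).mpr ⟨fun b => if hb : b = (T C).root then x
          else h ⟨Sum.inr b, fun hc => hb (Sum.inr.inj hc)⟩, ⟨?_, ?_⟩, dif_pos rfl⟩
        · intro β b b' hR
          have hb' : b' ≠ (T C).root := fun e => root_not_target C β b (e ▸ hR)
          simp only [dif_neg hb']
          by_cases hb : b = (T C).root
          · simp only [dif_pos hb]
            subst hb
            have := hh.1 β (glue (T A) (T C)).root
              ⟨Sum.inr b', fun hc => hb' (Sum.inr.inj hc)⟩ ⟨rfl, hR⟩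
            rwa [hr'] at this
          · simp only [dif_neg hb]
            exact hh.1 β ⟨Sum.inr b, fun hc => hb (Sum.inr.inj hc)⟩
              ⟨Sum.inr b', fun hc => hb' (Sum.inr.inj hc)⟩ hR
        · intro b p hv
          by_cases hb : b = (T C).root
          · simp only [dif_pos hb]
            subst hb
            have := hh.2 (glue (T A) (T C)).root p (Or.inr ⟨rfl, hv⟩)
            rwa [hr'] at this
          · simp only [dif_neg hb]
            exact hh.2 ⟨Sum.inr b, fun hc => hb (Sum.inr.inj hc)⟩ p hv
  | dia α A ih =>
    constructor
    · rintro ⟨y, hxy, hy⟩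
      obtain ⟨g, hg, hgr⟩ := (ih y).mp hy
      refine ⟨fun o => match o with | none => x | some a => g a, ⟨?_, ?_⟩, rfl⟩
      · intro β o o' hR
        match o, o' with
        | none, some a =>
          obtain ⟨rfl, rfl⟩ := hR
          show Wm.R β x (g (T A).root)
          rw [hgr]; exact hxy
        | none, none => exact hR.elim
        | some a, none => exact hR.elim
        | some a, some a' => exact hg.1 β a a' hR
      · intro o p hv
        match o with
        | none => exact hv.elim
        | some a => exact hg.2 a p hv
    · rintro ⟨f, hf, hfr⟩
      refine ⟨f (some (T A).root), ?_, (ih _).mpr ⟨fun a => f (some a),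
        ⟨fun β a a' h => hf.1 β (some a) (some a') h,
         fun a p h => hf.2 (some a) p h⟩, rfl⟩⟩
      have hfr' : f none = x := hfr
      have := hf.1 α none (some (T A).root) ⟨rfl, rfl⟩
      rwa [hfr'] at this
end

section
/- Expansion lemma: let S be a set of modality indices in ℕ ∪ {ω} and α ∉ S. Given an RC_S-frame (W, (R_β)_{β∈S}) — i.e., satisfying polytransitivity, condition J, and monotonicity among indices in S — there exists a relation R_α on W such that (W, (R_β)_{β∈S∪{α}}) is an RC_{S∪{α}}-frame. Concretely, letting S⁺ = {β∈S : β>α}, one may take R_α to be the smallest relation containing ⋃_{β∈S⁺} R_β and closed under R ↦ R ∪ R∘R ∪ ⋃_{β∈S⁺} R_β⁻¹∘R. -/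
variable {W : Type}

/-- The smallest relation containing ⋃_{β∈S⁺} R_β and closed under
R ↦ R ∪ R∘R ∪ ⋃_{β∈S⁺} R_β⁻¹∘R. -/
inductive ERel (R : Lbl → W → W → Prop) (Sp : Set Lbl) : W → W → Prop where
  | base {β x y} : β ∈ Sp → R β x y → ERel R Sp x y
  | comp {x y z} : ERel R Sp x y → ERel R Sp y z → ERel R Sp x z
  | j {β x y z} : β ∈ Sp → R β z x → ERel R Sp z y → ERel R Sp x y

variable {W : Type}

lemma erel_le {R : Lbl → W → W → Prop} {S : Set Lbl} {α : Lbl}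
    (hpoly : ∀ β ∈ S, ∀ γ ∈ S, ∀ x y z, R β x y → R γ y z → R (min β γ) x z)
    (hJ : ∀ β ∈ S, ∀ γ ∈ S, γ < β → ∀ x y z, R β x y → R γ x z → R γ y z)
    (hmono : ∀ β ∈ S, ∀ γ ∈ S, γ < β → ∀ x y, R β x y → R γ x y)
    {γ : Lbl} (hγ : γ ∈ S) (hγα : γ < α) {x y : W}
    (h : ERel R {β ∈ S | α < β} x y) : R γ x y := by
  induction h with
  | base hβ hr => exact hmono _ hβ.1 _ hγ (hγα.trans hβ.2) _ _ hr
  | comp h1 h2 ih1 ih2 =>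
      have := hpoly _ hγ _ hγ _ _ _ ih1 ih2
      simpa using this
  | j hβ hr _ ih => exact hJ _ hβ.1 _ hγ (hγα.trans hβ.2) _ _ _ hr ih

lemma erel_J {R : Lbl → W → W → Prop} {S : Set Lbl} {α : Lbl}
    (hpoly : ∀ β ∈ S, ∀ γ ∈ S, ∀ x y z, R β x y → R γ y z → R (min β γ) x z)
    (hJ : ∀ β ∈ S, ∀ γ ∈ S, γ < β → ∀ x y z, R β x y → R γ x z → R γ y z)
    {γ : Lbl} (hγ : γ ∈ S) (hγα : γ < α) {x y : W}
    (h : ERel R {β ∈ S | α < β} x y) : ∀ z, R γ x z → R γ y z := by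
  induction h with
  | base hβ hr => exact fun z hz => hJ _ hβ.1 _ hγ (hγα.trans hβ.2) _ _ _ hr hz
  | comp h1 h2 ih1 ih2 => exact fun z hz => ih2 z (ih1 z hz)
  | j hβ hr _ ih =>
      intro z hz
      have h1 := hpoly _ hβ.1 _ hγ _ _ _ hr hz
      rw [min_eq_right (hγα.trans hβ.2).le] at h1
      exact ih z h1

/-- Expansion lemma: an RC_S-frame can be expanded by a relation R_α for a fresh index
α ∉ S so as to obtain an RC_{S∪{α}}-frame; concretely one may take the closure ERel of
⋃_{β > α, β ∈ S} R_β. -/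
theorem stmt11 (S : Set Lbl) (α : Lbl) (hα : α ∉ S) (R : Lbl → W → W → Prop)
    (hpoly : ∀ β ∈ S, ∀ γ ∈ S, ∀ x y z, R β x y → R γ y z → R (min β γ) x z)
    (hJ : ∀ β ∈ S, ∀ γ ∈ S, γ < β → ∀ x y z, R β x y → R γ x z → R γ y z)
    (hmono : ∀ β ∈ S, ∀ γ ∈ S, γ < β → ∀ x y, R β x y → R γ x y) :
    ∃ Rα : W → W → Prop,
      ((∃ β ∈ S, α < β) → Rα = ERel R {β ∈ S | α < β}) ∧
      ((¬ ∃ β ∈ S, α < β) → Rα = fun _ _ => False) ∧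
      (let R' : Lbl → W → W → Prop := fun β => if β = α then Rα else R β
       (∀ β ∈ insert α S, ∀ γ ∈ insert α S, ∀ x y z,
          R' β x y → R' γ y z → R' (min β γ) x z) ∧
       (∀ β ∈ insert α S, ∀ γ ∈ insert α S, γ < β → ∀ x y z,
          R' β x y → R' γ x z → R' γ y z) ∧
       (∀ β ∈ insert α S, ∀ γ ∈ insert α S, γ < β → ∀ x y,
          R' β x y → R' γ x y)) := by
  classical
  by_cases hex : ∃ β ∈ S, α < β
  · set E := ERel R {β ∈ S | α < β} with hE
    refine ⟨E, fun _ => rfl, fun h => absurd hex h, ?_, ?_, ?_⟩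
    · -- polytransitivity
      intro β hβ γ hγ x y z hxy hyz
      rcases Set.mem_insert_iff.1 hβ with hβ | hβ <;>
        rcases Set.mem_insert_iff.1 hγ with hγ' | hγ'
      · obtain rfl : α = β := hβ.symm; obtain rfl : α = γ := hγ'.symm
        simp only [if_pos rfl, min_self] at *
        exact hxy.comp hyz
      · obtain rfl : α = β := hβ.symm
        have hγne : γ ≠ α := fun h => hα (h ▸ hγ')
        simp only [if_pos rfl, if_neg hγne] at hxy hyz
        rcases lt_or_gt_of_ne (Ne.symm hγne) with hlt | hlt
        · -- α < γ, min = α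
          rw [min_eq_left hlt.le, if_pos rfl]
          exact hxy.comp (ERel.base ⟨hγ', hlt⟩ hyz)
        · -- γ < α, min = γ
          rw [min_eq_right hlt.le, if_neg hγne]
          have h1 : R γ x y := erel_le hpoly hJ hmono hγ' hlt hxy
          have := hpoly _ hγ' _ hγ' _ _ _ h1 hyz
          simpa using this
      · obtain rfl : α = γ := hγ'.symm
        have hβne : β ≠ α := fun h => hα (h ▸ hβ)
        simp only [if_pos rfl, if_neg hβne] at hxy hyz
        rcases lt_or_gt_of_ne (Ne.symm hβne) with hlt | hlt
        · rw [min_eq_right hlt.le, if_pos rfl]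
          exact ERel.comp (ERel.base (show β ∈ {δ ∈ S | α < δ} from ⟨hβ, hlt⟩) hxy) hyz
        · rw [min_eq_left hlt.le, if_neg hβne]
          have h1 : R β y z := erel_le hpoly hJ hmono hβ hlt hyz
          have := hpoly _ hβ _ hβ _ _ _ hxy h1
          simpa using this
      · have hβne : β ≠ α := fun h => hα (h ▸ hβ)
        have hγne : γ ≠ α := fun h => hα (h ▸ hγ')
        have hmne : min β γ ≠ α := by
          rcases min_cases β γ with ⟨h, _⟩ | ⟨h, _⟩ <;> rw [h] <;> assumption
        simp only [if_neg hβne, if_neg hγne] at hxy hyz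
        rw [if_neg hmne]
        exact hpoly _ hβ _ hγ' _ _ _ hxy hyz
    · -- condition J
      intro β hβ γ hγ hlt x y z hxy hxz
      rcases Set.mem_insert_iff.1 hβ with hβ | hβ <;>
        rcases Set.mem_insert_iff.1 hγ with hγ' | hγ'
      · obtain rfl : α = β := hβ.symm; obtain rfl : α = γ := hγ'.symm; exact absurd hlt (lt_irrefl _)
      · obtain rfl : α = β := hβ.symm
        have hγne : γ ≠ α := fun h => hα (h ▸ hγ')
        simp only [if_pos rfl, if_neg hγne] at *
        exact erel_J hpoly hJ hγ' hlt hxy z hxz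
      · obtain rfl : α = γ := hγ'.symm
        have hβne : β ≠ α := fun h => hα (h ▸ hβ)
        simp only [if_pos rfl, if_neg hβne] at *
        exact ERel.j ⟨hβ, hlt⟩ hxy hxz
      · have hβne : β ≠ α := fun h => hα (h ▸ hβ)
        have hγne : γ ≠ α := fun h => hα (h ▸ hγ')
        simp only [if_neg hβne, if_neg hγne] at *
        exact hJ _ hβ _ hγ' hlt _ _ _ hxy hxz
    · -- monotonicity
      intro β hβ γ hγ hlt x y hxy
      rcases Set.mem_insert_iff.1 hβ with hβ | hβ <;>
        rcases Set.mem_insert_iff.1 hγ with hγ' | hγ'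
      · obtain rfl : α = β := hβ.symm; obtain rfl : α = γ := hγ'.symm; exact absurd hlt (lt_irrefl _)
      · obtain rfl : α = β := hβ.symm
        have hγne : γ ≠ α := fun h => hα (h ▸ hγ')
        simp only [if_pos rfl, if_neg hγne] at *
        exact erel_le hpoly hJ hmono hγ' hlt hxy
      · obtain rfl : α = γ := hγ'.symm
        have hβne : β ≠ α := fun h => hα (h ▸ hβ)
        simp only [if_pos rfl, if_neg hβne] at *
        exact ERel.base ⟨hβ, hlt⟩ hxy
      · have hβne : β ≠ α := fun h => hα (h ▸ hβ)
        have hγne : γ ≠ α := fun h => hα (h ▸ hγ')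
        simp only [if_neg hβne, if_neg hγne] at *
        exact hmono _ hβ _ hγ' hlt _ _ hxy
  · refine ⟨fun _ _ => False, fun h => absurd h hex, fun _ => rfl, ?_, ?_, ?_⟩
    · intro β hβ γ hγ x y z hxy hyz
      rcases Set.mem_insert_iff.1 hβ with hβ | hβ
      · obtain rfl : α = β := hβ.symm; simp only [if_pos rfl] at hxy; exact hxy.elim
      rcases Set.mem_insert_iff.1 hγ with hγ' | hγ'
      · obtain rfl : α = γ := hγ'.symm; simp only [if_pos rfl] at hyz; exact hyz.elim
      have hβne : β ≠ α := fun h => hα (h ▸ hβ)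
      have hγne : γ ≠ α := fun h => hα (h ▸ hγ')
      have hmne : min β γ ≠ α := by
        rcases min_cases β γ with ⟨h, _⟩ | ⟨h, _⟩ <;> rw [h] <;> assumption
      simp only [if_neg hβne, if_neg hγne] at hxy hyz
      rw [if_neg hmne]
      exact hpoly _ hβ _ hγ' _ _ _ hxy hyz
    · intro β hβ γ hγ hlt x y z hxy hxz
      rcases Set.mem_insert_iff.1 hβ with hβ | hβ
      · obtain rfl : α = β := hβ.symm; simp only [if_pos rfl] at hxy; exact hxy.elim
      rcases Set.mem_insert_iff.1 hγ with hγ' | hγ'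
      · obtain rfl : α = γ := hγ'.symm; simp only [if_pos rfl] at hxz; exact hxz.elim
      have hβne : β ≠ α := fun h => hα (h ▸ hβ)
      have hγne : γ ≠ α := fun h => hα (h ▸ hγ')
      simp only [if_neg hβne, if_neg hγne] at *
      exact hJ _ hβ _ hγ' hlt _ _ _ hxy hxz
    · intro β hβ γ hγ hlt x y hxy
      rcases Set.mem_insert_iff.1 hβ with hβ | hβ
      · obtain rfl : α = β := hβ.symm; simp only [if_pos rfl] at hxy; exact hxy.elim
      rcases Set.mem_insert_iff.1 hγ with hγ' | hγ'
      · obtain rfl : α = γ := hγ'.symm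
        have hβne : β ≠ α := fun h => hα (h ▸ hβ)
        simp only [if_neg hβne] at hxy
        exact absurd ⟨β, hβ, hlt⟩ hex
      have hβne : β ≠ α := fun h => hα (h ▸ hβ)
      have hγne : γ ≠ α := fun h => hα (h ▸ hγ')
      simp only [if_neg hβne, if_neg hγne] at *
      exact hmono _ hβ _ hγ' hlt _ _ hxy
end

section
/- In the expansion construction: with R_α defined as the union over n of R_α^n where R_α^0 = ⋃_{β∈S⁺} R_β and R_α^{n+1} = R_α^n ∪ R_α^n∘R_α^n ∪ ⋃_{β∈S⁺} R_β⁻¹∘R_α^n, one has for every n and every γ ∈ S with γ < α: (1) R_α^n ⊆ R_γ, and (2) (R_α^n)⁻¹∘R_γ ⊆ R_γ. -/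
variable {W : Type}

/-- The iterated approximations R_α^n of the expansion construction:
R_α^0 = ⋃_{β∈S⁺} R_β and R_α^{n+1} = R_α^n ∪ R_α^n∘R_α^n ∪ ⋃_{β∈S⁺} R_β⁻¹∘R_α^n. -/
def Rn (R : Lbl → W → W → Prop) (Sp : Set Lbl) : ℕ → W → W → Prop
  | 0 => fun x y => ∃ β ∈ Sp, R β x y
  | n + 1 => fun x y =>
      Rn R Sp n x y ∨ (∃ z, Rn R Sp n x z ∧ Rn R Sp n z y) ∨
      (∃ β ∈ Sp, ∃ z, R β z x ∧ Rn R Sp n z y)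

/-- In the expansion construction, for every n and every γ ∈ S with γ < α:
(1) R_α^n ⊆ R_γ and (2) (R_α^n)⁻¹∘R_γ ⊆ R_γ. -/
theorem stmt12 (S : Set Lbl) (α : Lbl) (hα : α ∉ S) (R : Lbl → W → W → Prop)
    (hpoly : ∀ β ∈ S, ∀ γ ∈ S, ∀ x y z, R β x y → R γ y z → R (min β γ) x z)
    (hJ : ∀ β ∈ S, ∀ γ ∈ S, γ < β → ∀ x y z, R β x y → R γ x z → R γ y z)
    (hmono : ∀ β ∈ S, ∀ γ ∈ S, γ < β → ∀ x y, R β x y → R γ x y)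
    (γ : Lbl) (hγS : γ ∈ S) (hγα : γ < α) (n : ℕ) :
    (∀ x y, Rn R {β ∈ S | α < β} n x y → R γ x y) ∧
    (∀ x y z, Rn R {β ∈ S | α < β} n x y → R γ x z → R γ y z) := by
  induction n with
  | zero =>
    constructor
    · rintro x y ⟨β, ⟨hβS, hαβ⟩, hR⟩
      exact hmono β hβS γ hγS (hγα.trans hαβ) x y hR
    · rintro x y z ⟨β, ⟨hβS, hαβ⟩, hR⟩ hxz
      exact hJ β hβS γ hγS (hγα.trans hαβ) x y z hR hxz
  | succ n ih =>
    obtain ⟨ih1, ih2⟩ := ih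
    constructor
    · rintro x y (h | ⟨w, h1, h2⟩ | ⟨β, ⟨hβS, hαβ⟩, w, hb, hn⟩)
      · exact ih1 x y h
      · have := hpoly γ hγS γ hγS x w y (ih1 x w h1) (ih1 w y h2)
        simpa using this
      · exact hJ β hβS γ hγS (hγα.trans hαβ) w x y hb (ih1 w y hn)
    · rintro x y z (h | ⟨w, h1, h2⟩ | ⟨β, ⟨hβS, hαβ⟩, w, hb, hn⟩) hxz
      · exact ih2 x y z h hxz
      · exact ih2 w y z h2 (ih2 x w z h1 hxz)
      · have hwz := hpoly β hβS γ hγS w x z hb hxz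
        rw [min_eq_right (hγα.trans hαβ).le] at hwz
        exact ih2 w y z hn hwz
end

section
/- Every strictly positive formula is RJ-equivalent to an ordered formula with the same set of modality labels. -/
/-- A fact: ⊤ or a conjunction of variables. -/
inductive IsFact : SPF → Prop where
  | top : IsFact .top
  | var (p) : IsFact (.var p)
  | and {A B} : IsFact A → IsFact B → IsFact (.and A B)

/-- Ordered formulas: of the form F ∧ ⟨m₀⟩A₀ ∧ … ∧ ⟨m_{k-1}⟩A_{k-1} with F a fact,
m₀ ≥ m₁ ≥ … ≥ m_{k-1}, each A_i ordered, and every modality occurring in A_i at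
least m_i. -/
inductive Ordered : SPF → Prop where
  | mk (F : SPF) (l : List (Lbl × SPF)) :
      IsFact F →
      (∀ p ∈ l, Ordered p.2) →
      (∀ p ∈ l, ∀ β ∈ labels p.2, p.1 ≤ β) →
      List.Chain' (fun p q : Lbl × SPF => q.1 ≤ p.1) l →
      Ordered (l.foldl (fun C p => .and C (.dia p.1 p.2)) F)

section Aux

def fold (F : SPF) (l : List (Lbl × SPF)) : SPF :=
  l.foldl (fun C p => .and C (.dia p.1 p.2)) F

lemma fold_cons (F : SPF) (a : Lbl × SPF) (l : List (Lbl × SPF)) :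
    fold F (a :: l) = fold (.and F (.dia a.1 a.2)) l := rfl

lemma fold_proj_init (F : SPF) (l : List (Lbl × SPF)) : RJ (fold F l) F := by
  induction l generalizing F with
  | nil => exact RJ.id F
  | cons a l ih => exact RJ.cut (ih _) (RJ.andE1 _ _)

lemma fold_proj_mem {l : List (Lbl × SPF)} {p : Lbl × SPF} (F : SPF) (hp : p ∈ l) :
    RJ (fold F l) (.dia p.1 p.2) := by
  induction l generalizing F with
  | nil => cases hp
  | cons a l ih =>
    rcases List.mem_cons.1 hp with h | h
    · subst h; exact RJ.cut (fold_proj_init _ l) (RJ.andE2 _ _)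
    · exact ih _ h

lemma fold_intro {X F : SPF} {l : List (Lbl × SPF)} (hF : RJ X F)
    (h : ∀ p ∈ l, RJ X (.dia p.1 p.2)) : RJ X (fold F l) := by
  induction l generalizing F with
  | nil => exact hF
  | cons a l ih =>
    exact ih (RJ.andI hF (h a (List.mem_cons_self)))
      (fun p hp => h p (List.mem_cons_of_mem a hp))

lemma fold_mono_init {F F' : SPF} (l : List (Lbl × SPF)) (h : RJ F F') :
    RJ (fold F l) (fold F' l) :=
  fold_intro (RJ.cut (fold_proj_init _ _) h) (fun p hp => fold_proj_mem _ hp)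

lemma dia_fold_out {m : Lbl} {l : List (Lbl × SPF)} (F : SPF)
    (h : ∀ p ∈ l, p.1 < m) : RJ (fold (.dia m F) l) (.dia m (fold F l)) := by
  induction l generalizing F with
  | nil => exact RJ.id _
  | cons a l ih =>
    refine RJ.cut (fold_mono_init l ?_) (ih _ (fun p hp => h p (List.mem_cons_of_mem a hp)))
    exact RJ.jax _ _ (h a (List.mem_cons_self))

lemma labels_fold (F : SPF) (l : List (Lbl × SPF)) (β : Lbl) :
    β ∈ labels (fold F l) ↔ β ∈ labels F ∨ ∃ p ∈ l, β = p.1 ∨ β ∈ labels p.2 := by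
  induction l generalizing F with
  | nil => simp [fold]
  | cons a l ih =>
    rw [fold_cons, ih]
    simp only [labels, List.mem_cons, Set.mem_union, Set.mem_insert_iff]
    constructor
    · rintro ((h | (h | h)) | ⟨p, hp, h⟩)
      · exact Or.inl h
      · exact Or.inr ⟨a, Or.inl rfl, Or.inl h⟩
      · exact Or.inr ⟨a, Or.inl rfl, Or.inr h⟩
      · exact Or.inr ⟨p, Or.inr hp, h⟩
    · rintro (h | ⟨p, (rfl | hp), h⟩)
      · exact Or.inl (Or.inl h)
      · rcases h with h | h
        · exact Or.inl (Or.inr (Or.inl h))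
        · exact Or.inl (Or.inr (Or.inr h))
      · exact Or.inr ⟨p, hp, h⟩

lemma IsFact.labels_eq {F : SPF} (h : IsFact F) : labels F = ∅ := by
  induction h with
  | top => rfl
  | var p => rfl
  | and _ _ ih1 ih2 => simp [labels, ih1, ih2]

abbrev rel : Lbl × SPF → Lbl × SPF → Prop := fun p q => q.1 ≤ p.1

instance : DecidableRel rel := fun p q => inferInstanceAs (Decidable (q.1 ≤ p.1))
instance : IsTotal (Lbl × SPF) rel := ⟨fun p q => le_total q.1 p.1⟩
instance : IsTrans (Lbl × SPF) rel := ⟨fun _ _ _ h1 h2 => le_trans h2 h1⟩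

lemma ordered_fold {F : SPF} {l : List (Lbl × SPF)} (hF : IsFact F)
    (h1 : ∀ p ∈ l, Ordered p.2) (h2 : ∀ p ∈ l, ∀ β ∈ labels p.2, p.1 ≤ β)
    (h3 : List.Pairwise rel l) : Ordered (fold F l) :=
  Ordered.mk F l hF h1 h2 h3.isChain

theorem main (A : SPF) :
    ∃ F l, IsFact F ∧ (∀ p ∈ l, Ordered p.2) ∧
      (∀ p ∈ l, ∀ β ∈ labels p.2, p.1 ≤ β) ∧ List.Pairwise rel l ∧
      (∀ β, β ∈ labels (fold F l) ↔ β ∈ labels A) ∧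
      RJ A (fold F l) ∧ RJ (fold F l) A := by
  induction A with
  | var p =>
    exact ⟨.var p, [], IsFact.var p, by simp, by simp, List.Pairwise.nil,
      fun β => Iff.rfl, RJ.id _, RJ.id _⟩
  | top =>
    exact ⟨.top, [], IsFact.top, by simp, by simp, List.Pairwise.nil,
      fun β => Iff.rfl, RJ.id _, RJ.id _⟩
  | and A1 A2 ih1 ih2 =>
    obtain ⟨F1, l1, hF1, ho1, hl1, hp1, hlab1, h1, h1'⟩ := ih1
    obtain ⟨F2, l2, hF2, ho2, hl2, hp2, hlab2, h2, h2'⟩ := ih2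
    refine ⟨.and F1 F2, List.insertionSort rel (l1 ++ l2), IsFact.and hF1 hF2, ?_, ?_, ?_, ?_, ?_, ?_⟩
    · intro p hp
      rcases List.mem_append.1 ((List.perm_insertionSort rel _).mem_iff.1 hp) with h | h
      · exact ho1 p h
      · exact ho2 p h
    · intro p hp
      rcases List.mem_append.1 ((List.perm_insertionSort rel _).mem_iff.1 hp) with h | h
      · exact hl1 p h
      · exact hl2 p h
    · exact (List.pairwise_insertionSort rel _)
    · intro β
      rw [labels_fold]
      simp only [labels, Set.mem_union]
      rw [← hlab1 β, ← hlab2 β, labels_fold, labels_fold]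
      constructor
      · rintro (h | ⟨p, hp, h⟩)
        · tauto
        · rcases List.mem_append.1 ((List.perm_insertionSort rel _).mem_iff.1 hp) with hm | hm
          · exact Or.inl (Or.inr ⟨p, hm, h⟩)
          · exact Or.inr (Or.inr ⟨p, hm, h⟩)
      · rintro ((h | ⟨p, hp, h⟩) | (h | ⟨p, hp, h⟩))
        · tauto
        · exact Or.inr ⟨p, (List.perm_insertionSort rel _).mem_iff.2
            (List.mem_append.2 (Or.inl hp)), h⟩
        · tauto
        · exact Or.inr ⟨p, (List.perm_insertionSort rel _).mem_iff.2
            (List.mem_append.2 (Or.inr hp)), h⟩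
    · refine fold_intro (RJ.andI (RJ.cut (RJ.andE1 _ _) (RJ.cut h1 (fold_proj_init _ _)))
        (RJ.cut (RJ.andE2 _ _) (RJ.cut h2 (fold_proj_init _ _)))) ?_
      intro p hp
      rcases List.mem_append.1 ((List.perm_insertionSort rel _).mem_iff.1 hp) with h | h
      · exact RJ.cut (RJ.andE1 _ _) (RJ.cut h1 (fold_proj_mem _ h))
      · exact RJ.cut (RJ.andE2 _ _) (RJ.cut h2 (fold_proj_mem _ h))
    · refine RJ.andI (RJ.cut ?_ h1') (RJ.cut ?_ h2')
      · refine fold_intro (RJ.cut (fold_proj_init _ _) (RJ.andE1 _ _)) ?_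
        intro p hp
        exact fold_proj_mem _ ((List.perm_insertionSort rel _).mem_iff.2
          (List.mem_append.2 (Or.inl hp)))
      · refine fold_intro (RJ.cut (fold_proj_init _ _) (RJ.andE2 _ _)) ?_
        intro p hp
        exact fold_proj_mem _ ((List.perm_insertionSort rel _).mem_iff.2
          (List.mem_append.2 (Or.inr hp)))
  | dia m A' ih =>
    obtain ⟨F, l, hF, ho, hl, hp, hlab, h, h'⟩ := ih
    set l1 := l.filter (fun p => decide (m ≤ p.1)) with hl1def
    set l2 := l.filter (fun p => !decide (m ≤ p.1)) with hl2def
    have mem1 : ∀ p ∈ l1, p ∈ l ∧ m ≤ p.1 := by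
      intro p hp
      have := List.mem_filter.1 hp
      exact ⟨this.1, by simpa using this.2⟩
    have mem2 : ∀ p ∈ l2, p ∈ l ∧ p.1 < m := by
      intro p hp
      have := List.mem_filter.1 hp
      refine ⟨this.1, ?_⟩
      have := this.2
      simp only [Bool.not_eq_true', decide_eq_false_iff_not, not_le] at this
      exact this
    have memsplit : ∀ p ∈ l, p ∈ l1 ∨ p ∈ l2 := by
      intro p hp
      by_cases hc : m ≤ p.1
      · exact Or.inl (List.mem_filter.2 ⟨hp, by simpa using hc⟩)
      · exact Or.inr (List.mem_filter.2 ⟨hp, by simpa using hc⟩)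
    set C1 := fold F l1 with hC1def
    refine ⟨.top, (m, C1) :: l2, IsFact.top, ?_, ?_, ?_, ?_, ?_, ?_⟩
    · intro p hpm
      rcases List.mem_cons.1 hpm with rfl | hp2
      · exact ordered_fold hF (fun q hq => ho q (mem1 q hq).1)
          (fun q hq => hl q (mem1 q hq).1) (hp.filter _)
      · exact ho p (mem2 p hp2).1
    · intro p hpm
      rcases List.mem_cons.1 hpm with rfl | hp2
      · intro β hβ
        rcases (labels_fold F l1 β).1 hβ with hb | ⟨q, hq, hb⟩
        · rw [hF.labels_eq] at hb; exact absurd hb (Set.notMem_empty β)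
        · rcases hb with rfl | hb
          · exact (mem1 q hq).2
          · exact le_trans (mem1 q hq).2 (hl q (mem1 q hq).1 β hb)
      · exact hl p (mem2 p hp2).1
    · refine List.Pairwise.cons ?_ (hp.filter _)
      intro q hq
      exact le_of_lt (mem2 q hq).2
    · intro β
      rw [labels_fold]
      simp only [labels, List.mem_cons, Set.mem_insert_iff]
      rw [← hlab β, labels_fold]
      constructor
      · rintro (h0 | ⟨p, (rfl | hp2), hb⟩)
        · exact absurd h0 (Set.notMem_empty β)
        · rcases hb with rfl | hb
          · exact Or.inl rfl
          · rcases (labels_fold F l1 β).1 hb with hb' | ⟨q, hq, hb'⟩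
            · exact Or.inr (Or.inl hb')
            · exact Or.inr (Or.inr ⟨q, (mem1 q hq).1, hb'⟩)
        · exact Or.inr (Or.inr ⟨p, (mem2 p hp2).1, hb⟩)
      · rintro (rfl | (hb | ⟨p, hpl, hb⟩))
        · exact Or.inr ⟨(β, C1), Or.inl rfl, Or.inl rfl⟩
        · exact Or.inr ⟨(m, C1), Or.inl rfl, Or.inr ((labels_fold F l1 β).2 (Or.inl hb))⟩
        · rcases memsplit p hpl with hm | hm
          · exact Or.inr ⟨(m, C1), Or.inl rfl,
              Or.inr ((labels_fold F l1 β).2 (Or.inr ⟨p, hm, hb⟩))⟩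
          · exact Or.inr ⟨p, Or.inr hm, hb⟩
    · rw [fold_cons]
      refine RJ.cut (RJ.diaMono m h) ?_
      refine fold_intro (RJ.andI (RJ.top _) (RJ.diaMono m
        (fold_intro (fold_proj_init _ _) (fun q hq => fold_proj_mem _ (mem1 q hq).1)))) ?_
      intro p hp2
      exact RJ.cut (RJ.diaMono m (fold_proj_mem _ (mem2 p hp2).1))
        (RJ.mix1 _ (le_of_lt (mem2 p hp2).2))
    · rw [fold_cons]
      refine RJ.cut (fold_mono_init l2 (RJ.andE2 _ _)) ?_
      refine RJ.cut (dia_fold_out C1 (fun p hp2 => (mem2 p hp2).2)) ?_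
      refine RJ.cut (RJ.diaMono m ?_) (RJ.diaMono m h')
      refine fold_intro (RJ.cut (fold_proj_init _ _) (fold_proj_init _ _)) ?_
      intro p hpl
      rcases memsplit p hpl with hm | hm
      · exact RJ.cut (fold_proj_init _ _) (fold_proj_mem _ hm)
      · exact fold_proj_mem _ hm

end Aux

/-- Every strictly positive formula is RJ-equivalent to an ordered formula with the
same set of modality labels. -/
theorem stmt13 (A : SPF) :
    ∃ B : SPF, Ordered B ∧ labels B = labels A ∧ RJ A B ∧ RJ B A := by
  obtain ⟨F, l, hF, ho, hl, hp, hlab, h, h'⟩ := main A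
  exact ⟨fold F l, ordered_fold hF ho hl hp, Set.ext hlab, h, h'⟩
end

section
/- If Γ is a deductively closed theory (over a logic L extending RCω) in an adequate set Φ, and ⟨α⟩B ∈ Γ, then setting Δ = {⟨β⟩C ∈ Γ : β < α} and y = the L-deductive closure of Δ ∪ {B} in Φ, we have ⟨α⟩B ∉ y. -/
/-- Conjunction of a list of formulas. -/
def listConj : List SPF → SPF
  | [] => .top
  | A :: l => .and A (listConj l)

/-- The set of modality labels occurring in formulas of Φ. -/
def setLabels (Φ : Set SPF) : Set Lbl := ⋃ A ∈ Φ, labels A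

/-- Adequate sets: closed under subformulas, containing ⊤, closed under raising the
modality of a diamond to any larger label occurring in Φ, and containing ⟨ω⟩p for each
variable p ∈ Φ. -/
def Adequate (Φ : Set SPF) : Prop :=
  SPF.top ∈ Φ ∧
  (∀ A B, SPF.and A B ∈ Φ → A ∈ Φ ∧ B ∈ Φ) ∧
  (∀ α A, SPF.dia α A ∈ Φ → A ∈ Φ) ∧
  (∀ β A α, SPF.dia β A ∈ Φ → β < α → α ∈ setLabels Φ → SPF.dia α A ∈ Φ) ∧
  (∀ p, SPF.var p ∈ Φ → SPF.dia ⊤ (SPF.var p) ∈ Φ)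

/-- An L-theory in Φ: a subset of Φ which contains every member of Φ derivable in L
from the conjunction of finitely many of its members. -/
def IsTheory (L : SPF → SPF → Prop) (Φ x : Set SPF) : Prop :=
  x ⊆ Φ ∧ ∀ l : List SPF, (∀ C ∈ l, C ∈ x) → ∀ A ∈ Φ, L (listConj l) A → A ∈ x

lemma key (α : Lbl) (B : SPF) (l : List SPF)
    (h : ∀ X ∈ l, X = B ∨ ∃ β D, β < α ∧ X = SPF.dia β D) :
    RCw (.and (.dia α B) (listConj l)) (.dia α (.and B (listConj l))) := by
  induction l with
  | nil =>
    exact RCw.cut (RCw.andE1 _ _) (RCw.diaMono α (RCw.andI (RCw.id B) (RCw.top B)))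
  | cons X l' ih =>
    have ih' := ih (fun Y hY => h Y (List.mem_cons_of_mem _ hY))
    rcases h X List.mem_cons_self with hXB | ⟨β, D, hβ, rfl⟩
    · -- X = B
      rw [hXB]
      have h1 : RCw (.and (.dia α B) (listConj (B :: l')))
          (.and (.dia α B) (listConj l')) :=
        RCw.andI (RCw.andE1 _ _) (RCw.cut (RCw.andE2 _ _) (RCw.andE2 _ _))
      refine RCw.cut (RCw.cut h1 ih') (RCw.diaMono α ?_)
      exact RCw.andI (RCw.andE1 _ _) (RCw.id _)
    · -- X = ⟨β⟩D
      have h1 : RCw (.and (.dia α B) (listConj (SPF.dia β D :: l')))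
          (.dia α (.and B (listConj l'))) :=
        RCw.cut (RCw.andI (RCw.andE1 _ _) (RCw.cut (RCw.andE2 _ _) (RCw.andE2 _ _))) ih'
      have h2 : RCw (.and (.dia α B) (listConj (SPF.dia β D :: l')))
          (.and (.dia α (.and B (listConj l'))) (.dia β D)) :=
        RCw.andI h1 (RCw.cut (RCw.andE2 _ _) (RCw.andE1 _ _))
      refine RCw.cut (RCw.cut h2 (RCw.jax _ _ hβ)) (RCw.diaMono α ?_)
      exact RCw.andI (RCw.cut (RCw.andE1 _ _) (RCw.andE1 _ _))
        (RCw.andI (RCw.andE2 _ _) (RCw.cut (RCw.andE1 _ _) (RCw.andE2 _ _)))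

/-- Let L be a logic extending RCω (closed under cut and conjunction introduction, and
irreflexive — a consequence of its arithmetical soundness), Γ an L-theory in an adequate
set Φ with ⟨α⟩B ∈ Γ, Δ = {⟨β⟩C ∈ Γ : β < α}, and y the L-deductive closure of Δ ∪ {B}
in Φ. Then ⟨α⟩B ∉ y. -/
theorem stmt14 (L : SPF → SPF → Prop)
    (hext : ∀ A B, RCw A B → L A B)
    (hcut : ∀ A B C, L A B → L B C → L A C)
    (handI : ∀ A B C, L A B → L A C → L A (.and B C))
    (hirr : ∀ A α, ¬ L A (.dia α A))
    (Φ Γ : Set SPF) (hΦ : Adequate Φ) (hΓ : IsTheory L Φ Γ)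
    (α : Lbl) (B : SPF) (hαB : SPF.dia α B ∈ Γ) :
    SPF.dia α B ∉
      {A | A ∈ Φ ∧ ∃ l : List SPF,
        (∀ C ∈ l, C ∈ insert B {C ∈ Γ | ∃ β D, β < α ∧ C = SPF.dia β D}) ∧
        L (listConj l) A} := by
  rintro ⟨hΦmem, l, hl, hL⟩
  set C := SPF.and B (listConj l) with hCdef
  have hC1 : L C (SPF.dia α B) := hcut _ _ _ (hext _ _ (RCw.andE2 _ _)) hL
  have hC3 : L C (SPF.and (SPF.dia α B) (listConj l)) :=
    handI _ _ _ hC1 (hext _ _ (RCw.andE2 _ _))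
  have hkey : RCw (SPF.and (SPF.dia α B) (listConj l)) (SPF.dia α C) := by
    apply key
    intro X hX
    rcases hl X hX with rfl | ⟨_, β, D, hβ, rfl⟩
    · exact Or.inl rfl
    · exact Or.inr ⟨β, D, hβ, rfl⟩
  exact hirr C α (hcut _ _ _ hC3 (hext _ _ hkey))
end

section
/- Irreflexivity of RCω: for every strictly positive formula A and every modality α ≤ ω, the sequent A ⊢ ⟨α⟩A is not derivable in RCω. -/
namespace S15

/-- Top-level diamond components of a formula. -/
def comp : SPF → List (Lbl × SPF)
  | .var _ => []
  | .top => []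
  | .and A B => comp A ++ comp B
  | .dia γ A => [(γ, A)]

/-- Size of a formula. -/
def sz : SPF → ℕ
  | .var _ => 1
  | .top => 1
  | .and A B => sz A + sz B + 1
  | .dia _ A => sz A + 1

lemma sz_pos (C : SPF) : 0 < sz C := by
  cases C <;> simp [sz]

lemma sz_comp {γ : Lbl} {D C : SPF} (h : (γ, D) ∈ comp C) : sz D < sz C := by
  induction C with
  | var n => simp [comp] at h
  | top => simp [comp] at h
  | and A B ihA ihB =>
    simp only [comp, List.mem_append] at h
    rcases h with h | h
    · have := ihA h; simp [sz]; omega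
    · have := ihB h; simp [sz]; omega
  | dia δ A ih =>
    simp only [comp, List.mem_singleton, Prod.mk.injEq] at h
    rcases h with ⟨rfl, rfl⟩
    simp [sz]

/-- A node of the tree model: a chain of component steps. -/
abbrev Node := List (Lbl × SPF)

/-- Validity of a chain starting from formula `X`. -/
def Ch : SPF → Node → Prop
  | _, [] => True
  | X, p :: l => p ∈ comp X ∧ Ch p.2 l

/-- Subformula at the end of a chain. -/
def sub : SPF → Node → SPF
  | X, [] => X
  | _, p :: l => sub p.2 l

lemma ch_append {l : Node} : ∀ {X : SPF} {m : Node},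
    Ch X (l ++ m) ↔ Ch X l ∧ Ch (sub X l) m := by
  induction l with
  | nil => intro X m; simp [Ch, sub]
  | cons p l ih =>
    intro X m
    simp only [List.cons_append, Ch, sub, List.append_eq, ih, and_assoc]

lemma sub_append {l : Node} : ∀ {X : SPF} {m : Node},
    sub X (l ++ m) = sub (sub X l) m := by
  induction l with
  | nil => intro X m; simp [sub]
  | cons p l ih => intro X m; simp only [List.cons_append, sub, List.append_eq, ih]

/-- Accessibility in the tree model of `A`: `v` branches off `u`'s path at a point below
which `u`'s labels are all `> γ`, and descends via labels `≥ γ`. -/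
def rel (A : SPF) (γ : Lbl) (u v : Node) : Prop :=
  Ch A u ∧ Ch A v ∧ ∃ c d e : Node, u = c ++ d ∧ v = c ++ e ∧ e ≠ [] ∧
    (∀ p ∈ d, γ < p.1) ∧ (∀ p ∈ e, γ ≤ p.1)

lemma relMono {A : SPF} {γ δ : Lbl} {u v : Node} (hle : δ ≤ γ)
    (h : rel A γ u v) : rel A δ u v := by
  obtain ⟨h1, h2, c, d, e, hu, hv, hne, hd, he⟩ := h
  exact ⟨h1, h2, c, d, e, hu, hv, hne,
    fun p hp => lt_of_le_of_lt hle (hd p hp),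
    fun p hp => le_trans hle (he p hp)⟩

lemma relTrans {A : SPF} {γ : Lbl} {u v w : Node}
    (h1 : rel A γ u v) (h2 : rel A γ v w) : rel A γ u w := by
  obtain ⟨hcu, _, c₁, d₁, e₁, hu, hv, hne₁, hd₁, he₁⟩ := h1
  obtain ⟨_, hcw, c₂, d₂, e₂, hv', hw, hne₂, hd₂, he₂⟩ := h2
  have hp₁ : c₁ <+: v := ⟨e₁, hv.symm⟩
  have hp₂ : c₂ <+: v := ⟨d₂, hv'.symm⟩
  rcases List.prefix_or_prefix_of_prefix hp₁ hp₂ with h | h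
  · -- c₁ ++ m = c₂
    obtain ⟨m, rfl⟩ := h
    have hm : e₁ = m ++ d₂ := by
      have : c₁ ++ e₁ = c₁ ++ (m ++ d₂) := by
        rw [← hv, hv', List.append_assoc]
      exact List.append_cancel_left this
    refine ⟨hcu, hcw, c₁, d₁, m ++ e₂, hu, by rw [hw, List.append_assoc], ?_, hd₁, ?_⟩
    · simp [hne₂]
    · intro p hp
      rcases List.mem_append.mp hp with hp | hp
      · exact he₁ p (hm ▸ List.mem_append.mpr (Or.inl hp))
      · exact he₂ p hp
  · -- c₂ ++ m = c₁
    obtain ⟨m, rfl⟩ := h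
    have hm : d₂ = m ++ e₁ := by
      have : c₂ ++ d₂ = c₂ ++ (m ++ e₁) := by
        rw [← hv', hv, List.append_assoc]
      exact List.append_cancel_left this
    refine ⟨hcu, hcw, c₂, m ++ d₁, e₂, by rw [hu, List.append_assoc], hw, hne₂, ?_, he₂⟩
    intro p hp
    rcases List.mem_append.mp hp with hp | hp
    · exact hd₂ p (hm ▸ List.mem_append.mpr (Or.inl hp))
    · exact hd₁ p hp

lemma relJ {A : SPF} {γ δ : Lbl} {u x y : Node} (hlt : δ < γ)
    (h1 : rel A γ u x) (h2 : rel A δ u y) : rel A δ x y := by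
  obtain ⟨_, hcx, c₁, d₁, e₁, hu, hx, hne₁, hd₁, he₁⟩ := h1
  obtain ⟨_, hcy, c₂, d₂, e₂, hu', hy, hne₂, hd₂, he₂⟩ := h2
  have hp₁ : c₁ <+: u := ⟨d₁, hu.symm⟩
  have hp₂ : c₂ <+: u := ⟨d₂, hu'.symm⟩
  rcases List.prefix_or_prefix_of_prefix hp₂ hp₁ with h | h
  · -- c₂ ++ m = c₁
    obtain ⟨m, rfl⟩ := h
    have hm : d₂ = m ++ d₁ := by
      have : c₂ ++ d₂ = c₂ ++ (m ++ d₁) := by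
        rw [← hu', hu, List.append_assoc]
      exact List.append_cancel_left this
    refine ⟨hcx, hcy, c₂, m ++ e₁, e₂, by rw [hx, List.append_assoc], hy, hne₂, ?_, he₂⟩
    intro p hp
    rcases List.mem_append.mp hp with hp | hp
    · exact hd₂ p (hm ▸ List.mem_append.mpr (Or.inl hp))
    · exact lt_of_lt_of_le hlt (he₁ p hp)
  · -- c₁ ++ m = c₂
    obtain ⟨m, rfl⟩ := h
    have hm : d₁ = m ++ d₂ := by
      have : c₁ ++ d₁ = c₁ ++ (m ++ d₂) := by
        rw [← hu, hu', List.append_assoc]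
      exact List.append_cancel_left this
    refine ⟨hcx, hcy, c₁, e₁, m ++ e₂, hx, by rw [hy, List.append_assoc], ?_, ?_, ?_⟩
    · simp [hne₂]
    · intro p hp; exact lt_of_lt_of_le hlt (he₁ p hp)
    · intro p hp
      rcases List.mem_append.mp hp with hp | hp
      · exact le_of_lt (lt_of_lt_of_le hlt (le_of_lt (hd₁ p (hm ▸ List.mem_append.mpr (Or.inl hp)))))
      · exact he₂ p hp

/-- Satisfaction in the tree model of `A` (all variables true everywhere). -/
def sat (A : SPF) : SPF → Node → Prop
  | .var _, _ => True
  | .top, _ => True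
  | .and B C, u => sat A B u ∧ sat A C u
  | .dia γ B, u => ∃ v, rel A γ u v ∧ sat A B v

/-- Persistence: anything true at a `⊤`-successor is true at the node itself. -/
lemma persLemma {A : SPF} {u v : Node} (h : rel A ⊤ u v) :
    ∀ {C : SPF}, sat A C v → sat A C u := by
  intro C
  induction C with
  | var n => intro _; trivial
  | top => intro _; trivial
  | and B C ihB ihC => intro hs; exact ⟨ihB hs.1, ihC hs.2⟩
  | dia δ D _ =>
    rintro ⟨z, hr, hz⟩
    exact ⟨z, relTrans (relMono le_top h) hr, hz⟩

/-- Soundness of RCω in the tree model. -/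
lemma sound {X Y : SPF} (h : RCw X Y) (A : SPF) :
    ∀ u : Node, sat A X u → sat A Y u := by
  induction h with
  | id B => exact fun u hs => hs
  | top B => exact fun u _ => trivial
  | cut h1 h2 ih1 ih2 => exact fun u hs => ih2 u (ih1 u hs)
  | andE1 B C => exact fun u hs => hs.1
  | andE2 B C => exact fun u hs => hs.2
  | andI h1 h2 ih1 ih2 => exact fun u hs => ⟨ih1 u hs, ih2 u hs⟩
  | diaMono γ h ih => rintro u ⟨v, hr, hs⟩; exact ⟨v, hr, ih v hs⟩
  | transAx γ B => rintro u ⟨v, hr, w, hr2, hs⟩; exact ⟨w, relTrans hr hr2, hs⟩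
  | mix1 B hba => rintro u ⟨v, hr, w, hr2, hs⟩; exact ⟨w, relTrans (relMono hba hr) hr2, hs⟩
  | mix2 B hba => rintro u ⟨v, hr, w, hr2, hs⟩; exact ⟨w, relTrans hr (relMono hba hr2), hs⟩
  | jax B C hba =>
    rintro u ⟨⟨x, hrx, hsx⟩, ⟨y, hry, hsy⟩⟩
    exact ⟨x, hrx, hsx, ⟨y, relJ hba hrx hry, hsy⟩⟩
  | mono B hba => rintro u ⟨v, hr, hs⟩; exact ⟨v, relMono (le_of_lt hba) hr, hs⟩
  | pers B => rintro u ⟨v, hr, hs⟩; exact persLemma hr hs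

/-- Structural satisfaction: a formula whose components are available at a node holds there. -/
lemma structSat (A : SPF) : ∀ (C : SPF) (u : Node), Ch A u →
    (∀ p ∈ comp C, p ∈ comp (sub A u)) → sat A C u := by
  intro C
  induction C with
  | var n => intro u _ _; trivial
  | top => intro u _ _; trivial
  | and B C ihB ihC =>
    intro u hch hsub
    refine ⟨ihB u hch ?_, ihC u hch ?_⟩ <;>
      · intro p hp; exact hsub p (by simp [comp, hp])
  | dia γ D ihD =>
    intro u hch hsub
    have hm : (γ, D) ∈ comp (sub A u) := hsub _ (by simp [comp])
    have hch' : Ch A (u ++ [(γ, D)]) := ch_append.mpr ⟨hch, ⟨hm, trivial⟩⟩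
    refine ⟨u ++ [(γ, D)], ⟨hch, hch', u, [], [(γ, D)], by simp, rfl, by simp, by simp, by simp⟩, ?_⟩
    refine ihD (u ++ [(γ, D)]) hch' ?_
    intro p hp
    rw [sub_append]
    simpa [sub] using hp

/-- If `C` holds at `u`, each of its components `⟨γ⟩D` holds at `u`. -/
lemma compSat {A : SPF} : ∀ {C : SPF} {u : Node}, sat A C u →
    ∀ {γ : Lbl} {D : SPF}, (γ, D) ∈ comp C → sat A (.dia γ D) u := by
  intro C
  induction C with
  | var n => intro u _ γ D h; simp [comp] at h
  | top => intro u _ γ D h; simp [comp] at h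
  | and B C ihB ihC =>
    intro u hs γ D h
    rcases List.mem_append.mp h with h | h
    · exact ihB hs.1 h
    · exact ihC hs.2 h
  | dia δ E _ =>
    intro u hs γ D h
    simp only [comp, List.mem_singleton, Prod.mk.injEq] at h
    rcases h with ⟨rfl, rfl⟩
    exact hs

/-- Core lemma: a formula `C` never holds strictly inside the subtree hanging below
one of its own occurrences as a component `(γ, C)`. -/
lemma core (A : SPF) : ∀ (n : ℕ) (C : SPF), sz C ≤ n →
    ∀ (x : Node) (γ : Lbl) (r : Node), r ≠ [] →
      Ch A (x ++ (γ, C) :: r) → ¬ sat A C (x ++ (γ, C) :: r) := by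
  intro n
  induction n with
  | zero => intro C hsz; exact absurd (lt_of_lt_of_le (sz_pos C) hsz) (by simp)
  | succ n ih =>
    intro C hsz x γ r hr hch hs
    -- split off the first step of r
    obtain ⟨⟨δ, D⟩, r', rfl⟩ : ∃ p r', r = p :: r' := by
      cases r with
      | nil => exact absurd rfl hr
      | cons p r' => exact ⟨p, r', rfl⟩
    -- chain decomposition: (δ, D) ∈ comp C
    have hch' : Ch A ((x ++ [(γ, C)]) ++ (δ, D) :: r') := by
      simpa using hch
    have hsubC : sub A (x ++ [(γ, C)]) = C := by
      rw [sub_append]; rfl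
    have hcomp : (δ, D) ∈ comp C ∧ Ch D r' := by
      have := (ch_append.mp hch').2
      rw [hsubC] at this
      exact this
    -- sat gives a witness for the component ⟨δ⟩D
    obtain ⟨w, hrel, hw⟩ := compSat hs hcomp.1
    obtain ⟨_, hcw, c, d, e, hy, hweq, hne, hd, he⟩ := hrel
    -- compare c with x₁ := x ++ [(γ, C)]
    have hy' : (x ++ [(γ, C)]) ++ (δ, D) :: r' = c ++ d := by simpa using hy
    have hp₁ : (x ++ [(γ, C)]) <+: c ++ d := ⟨(δ, D) :: r', hy'⟩
    have hp₂ : c <+: c ++ d := ⟨d, rfl⟩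
    rcases List.prefix_or_prefix_of_prefix hp₁ hp₂ with hpre | hpre
    · -- x₁ ++ m = c : the witness w lies strictly below the occurrence (δ, D); use IH
      obtain ⟨m, hm⟩ := hpre
      cases m with
      | nil =>
        -- c = x₁, hence d = (δ,D) :: r', so δ < δ, absurd
        simp only [List.append_nil] at hm
        have : (δ, D) :: r' = d := by
          have := hy'; rw [← hm] at this
          exact List.append_cancel_left this
        have : δ < δ := hd (δ, D) (by rw [← this]; simp)
        exact absurd this (lt_irrefl δ)
      | cons p m' =>
        -- c = x₁ ++ p :: m' with p = (δ, D)
        have hpd : (δ, D) :: r' = p :: (m' ++ d) := by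
          have h2 : (x ++ [(γ, C)]) ++ (δ, D) :: r' = (x ++ [(γ, C)]) ++ (p :: (m' ++ d)) := by
            rw [hy', ← hm]; simp
          exact List.append_cancel_left h2
        have hpeq : p = (δ, D) := by
          injection hpd with h1 _; exact h1.symm
        subst hpeq
        -- w = (x ++ [(γ,C)] ++ [(δ,D)]) ++ (m' ++ e)
        have hwshape : w = (x ++ [(γ, C)]) ++ (δ, D) :: (m' ++ e) := by
          rw [hweq, ← hm]
          simp
        have hne' : m' ++ e ≠ [] := by
          intro hcontra
          exact hne (List.append_eq_nil_iff.mp hcontra).2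
        have hszD : sz D ≤ n := by
          have := sz_comp hcomp.1
          omega
        have hchw : Ch A ((x ++ [(γ, C)]) ++ (δ, D) :: (m' ++ e)) := by
          rw [← hwshape]; exact hcw
        have := ih D hszD (x ++ [(γ, C)]) δ (m' ++ e) hne' hchw
        rw [← hwshape] at this
        exact this hw
    · -- c is a prefix of x₁ : then (δ, D) occurs in d, so δ < δ, absurd
      obtain ⟨m, hm⟩ := hpre
      have : c ++ (m ++ (δ, D) :: r') = c ++ d := by
        rw [← List.append_assoc, hm]
        exact hy'
      have hd' : m ++ (δ, D) :: r' = d := List.append_cancel_left this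
      have : δ < δ := hd (δ, D) (by rw [← hd']; simp)
      exact absurd this (lt_irrefl δ)

end S15

/-- Irreflexivity of RCω: for no strictly positive formula A and modality α ≤ ω is the
sequent A ⊢ ⟨α⟩A derivable in RCω. -/
theorem stmt15 (A : SPF) (α : Lbl) : ¬ RCw A (.dia α A) := by
  intro h
  -- A holds at the root of its own tree model
  have satA : S15.sat A A [] := S15.structSat A A [] trivial (fun p hp => hp)
  -- by soundness, ⟨α⟩A holds at the root
  have hdia : S15.sat A (.dia α A) [] := S15.sound h A [] satA
  obtain ⟨v, hrel, hv⟩ := hdia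
  obtain ⟨_, hcv, c, d, e, hu, hveq, hne, _, _⟩ := hrel
  -- the root is [], so c = [] and v = e ≠ []
  have hc : c = [] ∧ d = [] := by
    constructor
    · exact (List.append_eq_nil_iff.mp hu.symm).1
    · exact (List.append_eq_nil_iff.mp hu.symm).2
  have hvne : v ≠ [] := by
    rw [hveq, hc.1]
    simpa using hne
  obtain ⟨⟨γ₁, C₁⟩, v', rfl⟩ : ∃ p v', v = p :: v' := by
    cases v with
    | nil => exact absurd rfl hvne
    | cons p v' => exact ⟨p, v', rfl⟩
  have hmem : (γ₁, C₁) ∈ S15.comp A := hcv.1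
  -- the component ⟨γ₁⟩C₁ holds at v, giving a witness strictly inside its own subtree
  have h1 : S15.sat A (.dia γ₁ C₁) ((γ₁, C₁) :: v') := S15.compSat hv hmem
  obtain ⟨w, hrel2, hw⟩ := h1
  obtain ⟨_, hcw, c₂, d₂, e₂, hv2, hw2, hne2, hd2, _⟩ := hrel2
  cases c₂ with
  | nil =>
    -- then d₂ = (γ₁,C₁) :: v', whence γ₁ < γ₁
    simp only [List.nil_append] at hv2
    have : γ₁ < γ₁ := hd2 (γ₁, C₁) (by rw [← hv2]; simp)
    exact absurd this (lt_irrefl γ₁)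
  | cons p c₂' =>
    have hpeq : p = (γ₁, C₁) := by
      injection hv2 with h1 _; exact h1.symm
    subst hpeq
    -- w = [] ++ (γ₁, C₁) :: (c₂' ++ e₂), apply the core lemma
    have hwshape : w = ([] : S15.Node) ++ (γ₁, C₁) :: (c₂' ++ e₂) := by
      rw [hw2]; simp
    have hne' : c₂' ++ e₂ ≠ [] := by
      intro hcontra
      exact hne2 (List.append_eq_nil_iff.mp hcontra).2
    have hchw : S15.Ch A (([] : S15.Node) ++ (γ₁, C₁) :: (c₂' ++ e₂)) := by
      rw [← hwshape]; exact hcw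
    have := S15.core A (S15.sz C₁) C₁ le_rfl [] γ₁ (c₂' ++ e₂) hne' hchw
    rw [← hwshape] at this
    exact this hw
end

section
/- Characterization of the RJ-closure of a tree: let T[A] be the canonical tree of A with forest-like relations, S the set of labels of A. For nodes x, y of T[A], let x⊓y be their greatest lower bound in the tree, X and Y the unique paths from x⊓y to x and to y, and m(P) the minimal modality label on a nonempty path P. Then x R_n y holds in the RJ_S-closure of T[A] if and only if either (x⊓y = x, x ≠ y, and m(Y) = n), or (both X and Y are nonempty and m(X) > m(Y) = n). -/
variable {W : Type}

/-- The RJ_S-closure of a family of relations: the smallest family containing it and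
closed under polytransitivity and condition J (for indices in S). -/
inductive Cl (R : Lbl → W → W → Prop) (S : Set Lbl) : Lbl → W → W → Prop where
  | base {α x y} : α ∈ S → R α x y → Cl R S α x y
  | poly {α β x y z} : Cl R S α x y → Cl R S β y z → Cl R S (min α β) x z
  | j {α β x y z} : β < α → Cl R S α x y → Cl R S β x z → Cl R S β y z

section Tree

-- A labeled tree is given by a parent function and an edge-labeling (the label of the
-- edge from the parent into a node).
variable (parent : W → Option W) (lab : W → Lbl)

/-- x is the parent of y. -/
def pa (x y : W) : Prop := parent y = some x

/-- The edge relations of the tree: R_α consists of the edges labeled α. -/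
def treeR (α : Lbl) (x y : W) : Prop := pa parent x y ∧ lab y = α

/-- The label n occurs on the (unique) path from a to y: it labels the edge into some
node z with a a strict ancestor of z and z a weak ancestor of y. -/
def onPath (a y : W) (n : Lbl) : Prop :=
  ∃ z, lab z = n ∧ Relation.TransGen (pa parent) a z ∧
    Relation.ReflTransGen (pa parent) z y

/-- n is the minimal label on the path from a to y. -/
def isMinLabel (a y : W) (n : Lbl) : Prop :=
  onPath parent lab a y n ∧ ∀ k, onPath parent lab a y k → n ≤ k

/-- a is the greatest lower bound (deepest common ancestor) of x and y. -/
def isGLB (a x y : W) : Prop :=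
  Relation.ReflTransGen (pa parent) a x ∧ Relation.ReflTransGen (pa parent) a y ∧
  ∀ b, Relation.ReflTransGen (pa parent) b x → Relation.ReflTransGen (pa parent) b y →
    Relation.ReflTransGen (pa parent) b a

end Tree


section Aux

variable {W : Type} {parent : W → Option W} {lab : W → Lbl}

private lemma pa_unique {u v y : W} (h1 : pa parent u y) (h2 : pa parent v y) : u = v :=
  Option.some_inj.mp (h1.symm.trans h2)

private lemma tg_irrefl (hwf : WellFounded (pa parent)) (x : W) :
    ¬ Relation.TransGen (pa parent) x x :=
  (hwf.transGen).isIrrefl.irrefl x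

private lemma rtg_tg {x y : W} (h : Relation.ReflTransGen (pa parent) x y) (hne : x ≠ y) :
    Relation.TransGen (pa parent) x y := by
  rcases h.cases_head with rfl | ⟨c, hc, hcy⟩
  · exact absurd rfl hne
  · exact Relation.TransGen.head' hc hcy

private lemma rtg_antisymm (hwf : WellFounded (pa parent)) {x y : W}
    (h1 : Relation.ReflTransGen (pa parent) x y) (h2 : Relation.ReflTransGen (pa parent) y x) :
    x = y := by
  by_contra hne
  exact tg_irrefl hwf x ((rtg_tg h1 hne).trans_left h2)

private lemma anc_comp (hwf : WellFounded (pa parent)) :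
    ∀ w u v, Relation.ReflTransGen (pa parent) u w → Relation.ReflTransGen (pa parent) v w →
      Relation.ReflTransGen (pa parent) u v ∨ Relation.ReflTransGen (pa parent) v u := by
  intro w
  induction w using hwf.induction with
  | _ w ih =>
    intro u v hu hv
    rcases hu.cases_tail with rfl | ⟨u', huu', hu'w⟩
    · exact Or.inr hv
    · rcases hv.cases_tail with rfl | ⟨v', hvv', hv'w⟩
      · exact Or.inl hu
      · exact ih u' hu'w u v huu' (pa_unique hv'w hu'w ▸ hvv')

private lemma glb_ex (hwf : WellFounded (pa parent))
    (hroot : ∃ r : W, ∀ x, Relation.ReflTransGen (pa parent) r x) (x y : W) :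
    ∃ a, isGLB parent a x y := by
  obtain ⟨r, hr⟩ := hroot
  have main : ∀ x : W, (∃ c, Relation.ReflTransGen (pa parent) c x ∧
      Relation.ReflTransGen (pa parent) c y) → ∃ a, isGLB parent a x y := by
    intro x
    induction x using hwf.induction with
    | _ x ih =>
      rintro ⟨c, hcx, hcy⟩
      by_cases hxy : Relation.ReflTransGen (pa parent) x y
      · exact ⟨x, Relation.ReflTransGen.refl, hxy, fun b hb _ => hb⟩
      · rcases hcx.cases_tail with rfl | ⟨x', hcx', hx'x⟩
        · exact absurd hcy hxy
        · obtain ⟨a, ha1, ha2, ha3⟩ := ih x' hx'x ⟨c, hcx', hcy⟩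
          refine ⟨a, ha1.tail hx'x, ha2, fun b hbx hby => ?_⟩
          rcases hbx.cases_tail with rfl | ⟨w, hbw, hwx⟩
          · exact absurd hby hxy
          · exact ha3 b (pa_unique hwx hx'x ▸ hbw) hby
  exact main x ⟨r, hr x, hr y⟩

private lemma glb_refl {x y : W} (h : Relation.ReflTransGen (pa parent) x y) :
    isGLB parent x x y :=
  ⟨Relation.ReflTransGen.refl, h, fun b hb _ => hb⟩

private lemma onPath_single (hwf : WellFounded (pa parent)) {a x : W} (h : pa parent a x)
    {k : Lbl} : onPath parent lab a x k ↔ k = lab x := by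
  constructor
  · rintro ⟨z, hz, haz, hzx⟩
    rcases hzx.cases_tail with rfl | ⟨w, hzw, hwx⟩
    · exact hz.symm
    · have hw := pa_unique hwx h
      subst hw
      exact absurd (haz.trans_left hzw) (tg_irrefl hwf _)
  · rintro rfl
    exact ⟨x, rfl, Relation.TransGen.single h, Relation.ReflTransGen.refl⟩

private lemma onPath_split (hwf : WellFounded (pa parent)) {a b x : W}
    (hab : Relation.TransGen (pa parent) a b) (hbx : Relation.ReflTransGen (pa parent) b x)
    {k : Lbl} :
    onPath parent lab a x k ↔ onPath parent lab a b k ∨ onPath parent lab b x k := by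
  constructor
  · rintro ⟨z, hz, haz, hzx⟩
    rcases anc_comp hwf x z b hzx hbx with hzb | hbz
    · exact Or.inl ⟨z, hz, haz, hzb⟩
    · rcases eq_or_ne b z with rfl | hne
      · exact Or.inl ⟨b, hz, haz, Relation.ReflTransGen.refl⟩
      · exact Or.inr ⟨z, hz, rtg_tg hbz hne, hzx⟩
  · rintro (⟨z, hz, haz, hzb⟩ | ⟨z, hz, hbz, hzx⟩)
    · exact ⟨z, hz, haz, hzb.trans hbx⟩
    · exact ⟨z, hz, hab.trans hbz, hzx⟩

private lemma minLabel_single (hwf : WellFounded (pa parent)) {a x : W} (h : pa parent a x) :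
    isMinLabel parent lab a x (lab x) :=
  ⟨(onPath_single hwf h).mpr rfl, fun k hk => le_of_eq ((onPath_single hwf h).mp hk).symm⟩

private lemma minLabel_ex (hwf : WellFounded (pa parent)) {a x : W}
    (h : Relation.TransGen (pa parent) a x) :
    ∃ m, isMinLabel parent lab a x m := by
  induction h using Relation.TransGen.head_induction_on with
  | single h => exact ⟨lab x, minLabel_single hwf h⟩
  | head h' htg ihp =>
    obtain ⟨m', hm'⟩ := ihp
    rename_i a' c
    have key : ∀ k, onPath parent lab a' x k ↔ k = lab c ∨ onPath parent lab c x k := by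
      intro k
      rw [onPath_split hwf (Relation.TransGen.single h') htg.to_reflTransGen,
        onPath_single hwf h']
    refine ⟨min (lab c) m', ?_, ?_⟩
    · rcases le_total (lab c) m' with hle | hle
      · rw [min_eq_left hle]; exact (key _).mpr (Or.inl rfl)
      · rw [min_eq_right hle]; exact (key _).mpr (Or.inr hm'.1)
    · intro k hk
      rcases (key k).mp hk with rfl | h2
      · exact min_le_left _ _
      · exact le_trans (min_le_right _ _) (hm'.2 k h2)

private lemma minLabel_unique {a x : W} {m m' : Lbl} (h1 : isMinLabel parent lab a x m)
    (h2 : isMinLabel parent lab a x m') : m = m' :=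
  le_antisymm (h1.2 m' h2.1) (h2.2 m h1.1)

open Classical in
noncomputable def pathMin (parent : W → Option W) (lab : W → Lbl) (a x : W) : WithTop Lbl :=
  if h : ∃ m, isMinLabel parent lab a x m then (h.choose : Lbl) else ⊤

private lemma pathMin_eq {a x : W} {m : Lbl} (h : isMinLabel parent lab a x m) :
    pathMin parent lab a x = (m : WithTop Lbl) := by
  have hex : ∃ m, isMinLabel parent lab a x m := ⟨m, h⟩
  rw [pathMin, dif_pos hex]
  exact congrArg _ (minLabel_unique hex.choose_spec h)

private lemma pathMin_self (hwf : WellFounded (pa parent)) (a : W) :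
    pathMin parent lab a a = ⊤ := by
  rw [pathMin, dif_neg]
  rintro ⟨m, ⟨z, -, haz, hza⟩, -⟩
  exact tg_irrefl hwf a (haz.trans_left hza)

private lemma pathMin_tg (hwf : WellFounded (pa parent)) {a x : W}
    (h : Relation.TransGen (pa parent) a x) :
    ∃ m : Lbl, pathMin parent lab a x = (m : WithTop Lbl) ∧ isMinLabel parent lab a x m := by
  obtain ⟨m, hm⟩ := minLabel_ex (lab := lab) hwf h
  exact ⟨m, pathMin_eq hm, hm⟩

private lemma pathMin_single (hwf : WellFounded (pa parent)) {a b : W} (h : pa parent a b) :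
    pathMin parent lab a b = (lab b : WithTop Lbl) :=
  pathMin_eq (minLabel_single hwf h)

private lemma pathMin_split (hwf : WellFounded (pa parent)) {a b x : W}
    (hab : Relation.ReflTransGen (pa parent) a b) (hbx : Relation.ReflTransGen (pa parent) b x) :
    pathMin parent lab a x = min (pathMin parent lab a b) (pathMin parent lab b x) := by
  rcases eq_or_ne a b with rfl | hne1
  · rw [pathMin_self hwf]
    exact (min_eq_right le_top).symm
  rcases eq_or_ne b x with rfl | hne2
  · rw [pathMin_self hwf]
    exact (min_eq_left le_top).symm
  have t1 := rtg_tg hab hne1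
  have t2 := rtg_tg hbx hne2
  obtain ⟨m1, e1, h1⟩ := pathMin_tg (lab := lab) hwf t1
  obtain ⟨m2, e2, h2⟩ := pathMin_tg (lab := lab) hwf t2
  rw [e1, e2, ← WithTop.coe_min]
  apply pathMin_eq
  constructor
  · rcases le_total m1 m2 with hle | hle
    · rw [min_eq_left hle]; exact (onPath_split hwf t1 hbx).mpr (Or.inl h1.1)
    · rw [min_eq_right hle]; exact (onPath_split hwf t1 hbx).mpr (Or.inr h2.1)
  · intro k hk
    rcases (onPath_split hwf t1 hbx).mp hk with h | h
    · exact le_trans (min_le_left _ _) (h1.2 k h)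
    · exact le_trans (min_le_right _ _) (h2.2 k h)

private lemma cl_of_min (hwf : WellFounded (pa parent)) {S : Set Lbl}
    (hS : S = {n | ∃ x y, pa parent x y ∧ lab y = n}) {a x : W}
    (h : Relation.TransGen (pa parent) a x) :
    ∀ m, isMinLabel parent lab a x m → Cl (treeR parent lab) S m a x := by
  induction h using Relation.TransGen.head_induction_on with
  | single h =>
    intro m hm
    have hml := minLabel_unique hm (minLabel_single hwf h)
    subst hml
    refine Cl.base ?_ ⟨h, rfl⟩
    rw [hS]; exact ⟨_, x, h, rfl⟩
  | head h' htg ihp =>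
    intro m hm
    rename_i a' c
    obtain ⟨m', em', hm'⟩ := pathMin_tg (lab := lab) hwf htg
    have hmm : min (lab c) m' = m := by
      have e3 := pathMin_eq hm
      rw [pathMin_split hwf (Relation.ReflTransGen.single h') htg.to_reflTransGen,
          pathMin_single hwf h', em', ← WithTop.coe_min] at e3
      exact WithTop.coe_inj.mp e3
    have c1 : Cl (treeR parent lab) S (lab c) a' c := by
      refine Cl.base ?_ ⟨h', rfl⟩
      rw [hS]; exact ⟨a', c, h', rfl⟩
    rw [← hmm]
    exact Cl.poly c1 (ihp m' hm')

private lemma char (hwf : WellFounded (pa parent))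
    (hroot : ∃ r : W, ∀ x, Relation.ReflTransGen (pa parent) r x) {S : Set Lbl}
    (hS : S = {n | ∃ x y, pa parent x y ∧ lab y = n}) (n : Lbl) (x y : W) :
    Cl (treeR parent lab) S n x y ↔
      ∃ a, isGLB parent a x y ∧ pathMin parent lab a y = (n : WithTop Lbl) ∧
        (n : WithTop Lbl) < pathMin parent lab a x := by
  constructor
  · intro h
    induction h with
    | @base α u v hmem hr =>
      obtain ⟨hp, hl⟩ := hr
      refine ⟨u, glb_refl (Relation.ReflTransGen.single hp), ?_, ?_⟩
      · rw [pathMin_single hwf hp, hl]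
      · rw [pathMin_self hwf]; exact WithTop.coe_lt_top α
    | @poly α β u v w h1 h2 ih1 ih2 =>
      obtain ⟨a, hga, hay, hax⟩ := ih1
      obtain ⟨b, hgb, hbz, hby⟩ := ih2
      by_cases hba : Relation.ReflTransGen (pa parent) b a
      · -- Case A : b is a weak ancestor of a
        have hbv : pathMin parent lab b v = min (pathMin parent lab b a) (pathMin parent lab a v) :=
          pathMin_split hwf hba hga.2.1
        have hby' := lt_min_iff.mp (hbv ▸ hby)
        have hβα : (β : WithTop Lbl) < (α : WithTop Lbl) := hay ▸ hby'.2
        have hminαβ : min α β = β := min_eq_right (le_of_lt (WithTop.coe_lt_coe.mp hβα))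
        obtain ⟨c, hgc⟩ := glb_ex hwf hroot u w
        have hbc : Relation.ReflTransGen (pa parent) b c := hgc.2.2 b (hba.trans hga.1) hgb.2.1
        by_cases hcb : c = b
        · subst hcb
          refine ⟨c, hgc, ?_, ?_⟩
          · rw [hminαβ]; exact hbz
          · rw [hminαβ, pathMin_split hwf hba hga.1]
            exact lt_min hby'.1 (lt_trans hβα hax)
        · have htbc : Relation.TransGen (pa parent) b c := rtg_tg hbc fun h => hcb h.symm
          rcases anc_comp hwf u c a hgc.1 hga.1 with hca | hac
          · exact absurd (htbc.trans_left (hgb.2.2 c (hca.trans hga.2.1) hgc.2.1))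
              (tg_irrefl hwf b)
          · have hanb : a = b := rtg_antisymm hwf (hgb.2.2 a hga.2.1 (hac.trans hgc.2.1)) hba
            subst hanb
            have hane : a ≠ c := fun h => hcb h.symm
            have htac : Relation.TransGen (pa parent) a c := rtg_tg hac hane
            have eu : pathMin parent lab a u
                = min (pathMin parent lab a c) (pathMin parent lab c u) :=
              pathMin_split hwf hac hgc.1
            have ew : pathMin parent lab a w
                = min (pathMin parent lab a c) (pathMin parent lab c w) :=
              pathMin_split hwf hac hgc.2.1
            have h2 := lt_min_iff.mp (eu ▸ hax)
            have hq : min (pathMin parent lab a c) (pathMin parent lab c w)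
                = (β : WithTop Lbl) := ew.symm.trans hbz
            have hcw : pathMin parent lab c w = (β : WithTop Lbl) := by
              rcases le_total (pathMin parent lab a c) (pathMin parent lab c w) with hle | hle
              · rw [min_eq_left hle] at hq
                exact absurd (hq ▸ h2.1) (fun hh => absurd hβα (not_lt_of_gt hh))
              · rw [min_eq_right hle] at hq; exact hq
            refine ⟨c, hgc, ?_, ?_⟩
            · rw [hminαβ]; exact hcw
            · rw [hminαβ]; exact lt_trans hβα h2.2
      · -- Case B : a is a strict ancestor of b
        have hab : Relation.ReflTransGen (pa parent) a b :=
          (anc_comp hwf v a b hga.2.1 hgb.1).resolve_right hba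
        have hgaz : isGLB parent a u w := by
          refine ⟨hga.1, hab.trans hgb.2.1, fun b' hb'u hb'w => ?_⟩
          rcases anc_comp hwf u b' a hb'u hga.1 with h1 | h1
          · exact h1
          · rcases anc_comp hwf w b' b hb'w hgb.2.1 with h2 | h2
            · exact hga.2.2 b' hb'u (h2.trans hgb.1)
            · exact absurd (hga.2.2 b (h2.trans hb'u) hgb.1) hba
        have hαmin : (α : WithTop Lbl)
            = min (pathMin parent lab a b) (pathMin parent lab b v) :=
          hay.symm.trans (pathMin_split hwf hab hgb.1)
        have ewz : pathMin parent lab a w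
            = min (pathMin parent lab a b) (pathMin parent lab b w) :=
          pathMin_split hwf hab hgb.2.1
        rcases le_total (pathMin parent lab a b) ((β : WithTop Lbl)) with hle | hle
        · have h1 : pathMin parent lab a b < pathMin parent lab b v := lt_of_le_of_lt hle hby
          have hα : (α : WithTop Lbl) = pathMin parent lab a b :=
            hαmin.trans (min_eq_left h1.le)
          have hαβ : α ≤ β := WithTop.coe_le_coe.mp (hα ▸ hle)
          refine ⟨a, hgaz, ?_, ?_⟩
          · rw [min_eq_left hαβ, ewz, hbz, ← hα]
            exact min_eq_left (WithTop.coe_le_coe.mpr hαβ)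
          · rw [min_eq_left hαβ]; exact hax
        · have hβα2 : (β : WithTop Lbl) ≤ (α : WithTop Lbl) := by
            rw [hαmin]; exact le_min hle hby.le
          have hβα3 : β ≤ α := WithTop.coe_le_coe.mp hβα2
          refine ⟨a, hgaz, ?_, ?_⟩
          · rw [min_eq_right hβα3, ewz, hbz]
            exact min_eq_right hle
          · rw [min_eq_right hβα3]
            exact lt_of_le_of_lt hβα2 hax
    | @j α β u v w hβα h1 h2 ih1 ih2 =>
      obtain ⟨a, hga, hav, hau⟩ := ih1
      obtain ⟨b, hgb, hbw, hbu⟩ := ih2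
      have hβα' : (β : WithTop Lbl) < (α : WithTop Lbl) := WithTop.coe_lt_coe.mpr hβα
      by_cases hba : Relation.ReflTransGen (pa parent) b a
      · -- Case I
        have hsplit : pathMin parent lab b u
            = min (pathMin parent lab b a) (pathMin parent lab a u) :=
          pathMin_split hwf hba hga.1
        have h1' := lt_min_iff.mp (hsplit ▸ hbu)
        obtain ⟨c, hgc⟩ := glb_ex hwf hroot v w
        have hbc : Relation.ReflTransGen (pa parent) b c := hgc.2.2 b (hba.trans hga.2.1) hgb.2.1
        by_cases hcb : c = b
        · subst hcb
          refine ⟨c, hgc, hbw, ?_⟩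
          rw [pathMin_split hwf hba hga.2.1]
          refine lt_min h1'.1 ?_
          rw [hav]; exact hβα'
        · have htbc : Relation.TransGen (pa parent) b c := rtg_tg hbc fun h => hcb h.symm
          rcases anc_comp hwf v c a hgc.1 hga.2.1 with hca | hac
          · exact absurd (htbc.trans_left (hgb.2.2 c (hca.trans hga.1) hgc.2.1))
              (tg_irrefl hwf b)
          · have hanb : a = b := rtg_antisymm hwf (hgb.2.2 a hga.1 (hac.trans hgc.2.1)) hba
            subst hanb
            have hane : a ≠ c := fun h => hcb h.symm
            have hac' : Relation.TransGen (pa parent) a c := rtg_tg hac hane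
            have hsv : pathMin parent lab a v
                = min (pathMin parent lab a c) (pathMin parent lab c v) :=
              pathMin_split hwf hac hgc.1
            have hsw : pathMin parent lab a w
                = min (pathMin parent lab a c) (pathMin parent lab c w) :=
              pathMin_split hwf hac hgc.2.1
            have h2 : min (pathMin parent lab a c) (pathMin parent lab c v)
                = (α : WithTop Lbl) := hsv.symm.trans hav
            have hacα : (α : WithTop Lbl) ≤ pathMin parent lab a c := by
              calc (α : WithTop Lbl) = _ := h2.symm
                _ ≤ _ := min_le_left _ _
            have hq : min (pathMin parent lab a c) (pathMin parent lab c w)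
                = (β : WithTop Lbl) := hsw.symm.trans hbw
            have hcwβ : pathMin parent lab c w = (β : WithTop Lbl) := by
              rcases le_total (pathMin parent lab a c) (pathMin parent lab c w) with hle | hle
              · rw [min_eq_left hle] at hq
                exact absurd (hq ▸ hacα) (not_le_of_gt hβα')
              · rw [min_eq_right hle] at hq; exact hq
            refine ⟨c, hgc, hcwβ, ?_⟩
            calc (β : WithTop Lbl) < (α : WithTop Lbl) := hβα'
              _ = min (pathMin parent lab a c) (pathMin parent lab c v) := h2.symm
              _ ≤ pathMin parent lab c v := min_le_right _ _
      · -- Case II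
        have hab : Relation.ReflTransGen (pa parent) a b :=
          (anc_comp hwf u a b hga.1 hgb.1).resolve_right hba
        have hgaz : isGLB parent a v w := by
          refine ⟨hga.2.1, hab.trans hgb.2.1, fun b' hb'v hb'w => ?_⟩
          rcases anc_comp hwf v b' a hb'v hga.2.1 with h1' | h1'
          · exact h1'
          · rcases anc_comp hwf w b' b hb'w hgb.2.1 with h2' | h2'
            · exact hga.2.2 b' (h2'.trans hgb.1) hb'v
            · exact absurd (hga.2.2 b hgb.1 (h2'.trans hb'v)) hba
        have hsplit : pathMin parent lab a u
            = min (pathMin parent lab a b) (pathMin parent lab b u) :=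
          pathMin_split hwf hab hgb.1
        have h1' := lt_min_iff.mp (hsplit ▸ hau)
        refine ⟨a, hgaz, ?_, ?_⟩
        · rw [pathMin_split hwf hab hgb.2.1, hbw]
          exact min_eq_right (le_of_lt (lt_trans hβα' h1'.1))
        · rw [hav]; exact hβα'
  · rintro ⟨a, hg, hay, hlt⟩
    have hane : a ≠ y := by
      rintro rfl
      rw [pathMin_self hwf] at hay
      exact absurd hay.symm (WithTop.coe_ne_top)
    have htay : Relation.TransGen (pa parent) a y := rtg_tg hg.2.1 hane
    obtain ⟨m, em, hm⟩ := pathMin_tg (lab := lab) hwf htay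
    have hmn : m = n := WithTop.coe_inj.mp (em.symm.trans hay)
    subst hmn
    have cay := cl_of_min hwf hS htay m hm
    rcases eq_or_ne a x with rfl | hax
    · exact cay
    · have htax : Relation.TransGen (pa parent) a x := rtg_tg hg.1 hax
      obtain ⟨m', em', hm'⟩ := pathMin_tg (lab := lab) hwf htax
      rw [em'] at hlt
      exact Cl.j (WithTop.coe_lt_coe.mp hlt) (cl_of_min hwf hS htax m' hm') cay

end Aux

/-- Characterization of the RJ_S-closure of a (canonical) tree: x R_n y holds in the
closure iff either x⊓y = x, x ≠ y and the minimal label on the path from x to y is n,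
or both paths from x⊓y to x and to y are nonempty and their minimal labels m(X), m(Y)
satisfy m(X) > m(Y) = n. -/
theorem stmt16 (parent : W → Option W) (lab : W → Lbl)
    (hwf : WellFounded (pa parent))
    (hroot : ∃ r : W, ∀ x, Relation.ReflTransGen (pa parent) r x)
    (S : Set Lbl) (hS : S = {n | ∃ x y, pa parent x y ∧ lab y = n})
    (n : Lbl) (x y : W) :
    Cl (treeR parent lab) S n x y ↔
      (Relation.ReflTransGen (pa parent) x y ∧ x ≠ y ∧ isMinLabel parent lab x y n) ∨
      (∃ a, isGLB parent a x y ∧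
        Relation.TransGen (pa parent) a x ∧ Relation.TransGen (pa parent) a y ∧
        ∃ m, isMinLabel parent lab a x m ∧ isMinLabel parent lab a y n ∧ n < m) := by
  rw [char hwf hroot hS]
  constructor
  · rintro ⟨a, hg, hay, hlt⟩
    have hane : a ≠ y := by
      rintro rfl
      rw [pathMin_self hwf] at hay
      exact absurd hay.symm (WithTop.coe_ne_top)
    have htay : Relation.TransGen (pa parent) a y := rtg_tg hg.2.1 hane
    obtain ⟨m, em, hm⟩ := pathMin_tg (lab := lab) hwf htay
    have hmn : m = n := WithTop.coe_inj.mp (em.symm.trans hay)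
    subst hmn
    rcases eq_or_ne a x with rfl | hax
    · exact Or.inl ⟨hg.2.1, hane, hm⟩
    · have htax : Relation.TransGen (pa parent) a x := rtg_tg hg.1 hax
      obtain ⟨m', em', hm'⟩ := pathMin_tg (lab := lab) hwf htax
      rw [em'] at hlt
      exact Or.inr ⟨a, hg, htax, htay, m', hm', hm, WithTop.coe_lt_coe.mp hlt⟩
  · rintro (⟨hxy, hne, hmin⟩ | ⟨a, hg, htx, hty, m, hmx, hmy, hnm⟩)
    · exact ⟨x, glb_refl hxy, pathMin_eq hmin,
        by rw [pathMin_self hwf]; exact WithTop.coe_lt_top n⟩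
    · exact ⟨a, hg, pathMin_eq hmy,
        by rw [pathMin_eq hmx]; exact WithTop.coe_lt_coe.mpr hnm⟩
end
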